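/- arXiv:2005.12448 — 6 statements merged into one kernel-verified Lean document; each statement's English description precedes it below -/
import Mathlib

section
/- For every alternating sign matrix A of size n, the number of −1 entries plus the inversion number plus the complementary inversion number equals n(n−1)/2, i.e. 𝒩(A) + inv(A) + inv′(A) = C(n,2). -/
/-!
The conditions `j' ≤ j` and `j ≤ j'` together cover every pair of columns once and the
diagonal `j = j'` twice, so `inv(A) + inv'(A)` is the sum of `r_{i'} r_i` over rows `i' < i`
(with `r` the row sums, all `1`, giving `C(n,2)`) plus the same-column terms. For a column `c`
with sum `1` and entries in `{-1, 0, 1}`, `1 = (∑ c)² = 2 ∑_{i'<i} c_{i'} c_i + ∑ c_i²` and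
`∑ c_i² = 1 + 2 #{i | c_i = -1}`, so the same-column terms add up to `-𝒩(A)`.
-/

/-- An alternating sign matrix: entries in `{-1,0,1}`, all row and column sums equal `1`,
and the non-zero entries alternate in sign along every row and column (equivalently,
all partial row sums and partial column sums are `0` or `1`). -/
def IsASM (n : ℕ) (A : Matrix (Fin n) (Fin n) ℤ) : Prop :=
  (∀ i j, A i j = -1 ∨ A i j = 0 ∨ A i j = 1) ∧
  (∀ i, ∑ j, A i j = 1) ∧
  (∀ j, ∑ i, A i j = 1) ∧
  (∀ i j, (∑ j' ∈ Finset.Iic j, A i j') = 0 ∨ (∑ j' ∈ Finset.Iic j, A i j') = 1) ∧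
  (∀ i j, (∑ i' ∈ Finset.Iic i, A i' j) = 0 ∨ (∑ i' ∈ Finset.Iic i, A i' j) = 1)

/-- `inv(A) = ∑_{i'<i, j'≤j} a_{i',j} a_{i,j'}`; here a summand is indexed by the pair of
positions `((i',j),(i,j'))`. -/
def invASM (n : ℕ) (A : Matrix (Fin n) (Fin n) ℤ) : ℤ :=
  ∑ q ∈ (Finset.univ : Finset ((Fin n × Fin n) × (Fin n × Fin n))).filter
      (fun q => q.1.1 < q.2.1 ∧ q.2.2 ≤ q.1.2),
    A q.1.1 q.1.2 * A q.2.1 q.2.2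

/-- `inv'(A) = ∑_{i'<i, j≤j'} a_{i',j} a_{i,j'}`. -/
def invASM' (n : ℕ) (A : Matrix (Fin n) (Fin n) ℤ) : ℤ :=
  ∑ q ∈ (Finset.univ : Finset ((Fin n × Fin n) × (Fin n × Fin n))).filter
      (fun q => q.1.1 < q.2.1 ∧ q.1.2 ≤ q.2.2),
    A q.1.1 q.1.2 * A q.2.1 q.2.2

/-- `𝒩(A)`, the number of `-1` entries of `A`. -/
def numNegOnes (n : ℕ) (A : Matrix (Fin n) (Fin n) ℤ) : ℕ :=
  ((Finset.univ : Finset (Fin n × Fin n)).filter (fun p => A p.1 p.2 = -1)).card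

open Finset

namespace Finset

theorem sum_filter_lt_add_sum_filter_gt_add_sum_filter_eq {α β M : Type*} [LinearOrder β]
    [AddCommMonoid M] (s : Finset α) (u v : α → β) (f : α → M) :
    ∑ x ∈ s with u x < v x, f x + ∑ x ∈ s with v x < u x, f x + ∑ x ∈ s with u x = v x, f x
      = ∑ x ∈ s, f x := by
  simp only [sum_filter, ← sum_add_distrib]
  refine sum_congr rfl fun x _ => ?_
  rcases lt_trichotomy (u x) (v x) with h | h | h
  · simp [h, h.ne, h.not_gt]
  · simp [h]
  · simp [h, h.ne', h.not_gt]

theorem sum_filter_le_add_sum_filter_ge {α β M : Type*} [LinearOrder β] [AddCommMonoid M]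
    (s : Finset α) (u v : α → β) (f : α → M) :
    ∑ x ∈ s with u x ≤ v x, f x + ∑ x ∈ s with v x ≤ u x, f x
      = ∑ x ∈ s, f x + ∑ x ∈ s with u x = v x, f x := by
  simp only [sum_filter, ← sum_add_distrib]
  refine sum_congr rfl fun x _ => ?_
  rcases lt_trichotomy (u x) (v x) with h | h | h
  · simp [h.le, h.ne, h.not_ge]
  · simp [h]
  · simp [h.le, h.ne', h.not_ge]

end Finset

section Pairs

variable {ι : Type*} [Fintype ι] [LinearOrder ι]

theorem sq_sum_eq_two_mul_sum_lt_add_sum_sq {R : Type*} [CommSemiring R] (f : ι → R) :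
    (∑ i, f i) ^ 2 = 2 * ∑ p : ι × ι with p.1 < p.2, f p.1 * f p.2 + ∑ i, f i ^ 2 := by
  have hswap : ∑ p : ι × ι with p.2 < p.1, f p.1 * f p.2
      = ∑ p : ι × ι with p.1 < p.2, f p.1 * f p.2 :=
    sum_equiv (Equiv.prodComm ι ι) (by simp) (by simp [mul_comm])
  have hdiag : ∑ p : ι × ι with p.1 = p.2, f p.1 * f p.2 = ∑ i, f i ^ 2 := by
    simp [sum_filter, Fintype.sum_prod_type, sq]
  rw [sq, Fintype.sum_mul_sum, ← Fintype.sum_prod_type',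
    ← sum_filter_lt_add_sum_filter_gt_add_sum_filter_eq univ Prod.fst Prod.snd, hswap, hdiag]
  ring

theorem sum_filter_lt_mul_eq_neg_card {c : ι → ℤ} (hc : ∀ i, c i = -1 ∨ c i = 0 ∨ c i = 1)
    (hsum : ∑ i, c i = 1) :
    ∑ p : ι × ι with p.1 < p.2, c p.1 * c p.2 = -#{i | c i = -1} := by
  have hsq : ∑ i, c i ^ 2 = 1 + 2 * #{i | c i = -1} := by
    have hpt : ∀ i, c i ^ 2 = c i + 2 * if c i = -1 then 1 else 0 := fun i => by
      rcases hc i with h | h | h <;> simp [h]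
    simp only [hpt, sum_add_distrib, ← mul_sum, hsum, natCast_card_filter]
  have := sq_sum_eq_two_mul_sum_lt_add_sum_sq c
  rw [hsum, hsq] at this
  linarith

variable {R : Type*} [CommSemiring R] (A : Matrix ι ι R)

theorem sum_filter_row_lt_eq_sum_mul_rowSum :
    ∑ q : (ι × ι) × (ι × ι) with q.1.1 < q.2.1, A q.1.1 q.1.2 * A q.2.1 q.2.2
      = ∑ p : ι × ι with p.1 < p.2, (∑ j, A p.1 j) * ∑ j, A p.2 j := by
  simp only [sum_filter, Fintype.sum_prod_type, Fintype.sum_mul_sum]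
  refine sum_congr rfl fun i' _ => ?_
  rw [sum_comm]
  refine sum_congr rfl fun i _ => ?_
  split_ifs <;> simp

theorem sum_filter_row_lt_col_eq_sum_col :
    ∑ q : (ι × ι) × (ι × ι) with q.1.1 < q.2.1 ∧ q.2.2 = q.1.2, A q.1.1 q.1.2 * A q.2.1 q.2.2
      = ∑ j, ∑ p : ι × ι with p.1 < p.2, A p.1 j * A p.2 j := by
  simp only [sum_filter, ite_and, Fintype.sum_prod_type, sum_ite_irrel, sum_ite_eq', mem_univ,
    if_true, sum_const_zero]
  exact sum_comm

end Pairs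

theorem invASM_add_invASM' (n : ℕ) (A : Matrix (Fin n) (Fin n) ℤ) :
    invASM n A + invASM' n A
      = ∑ q : (Fin n × Fin n) × (Fin n × Fin n) with q.1.1 < q.2.1, A q.1.1 q.1.2 * A q.2.1 q.2.2
        + ∑ q : (Fin n × Fin n) × (Fin n × Fin n) with q.1.1 < q.2.1 ∧ q.2.2 = q.1.2,
            A q.1.1 q.1.2 * A q.2.1 q.2.2 := by
  simp only [invASM, invASM', ← filter_filter]
  exact sum_filter_le_add_sum_filter_ge _ (fun q : (Fin n × Fin n) × (Fin n × Fin n) => q.2.2)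
    (fun q => q.1.2) _

theorem numNegOnes_eq_sum_card_col (n : ℕ) (A : Matrix (Fin n) (Fin n) ℤ) :
    numNegOnes n A = ∑ j, #{i | A i j = -1} := by
  simp only [numNegOnes, card_filter, Fintype.sum_prod_type]
  exact sum_comm

/-- For every ASM `A` of size `n`: `𝒩(A) + inv(A) + inv'(A) = C(n,2)`. -/
theorem stmt_3 (n : ℕ) (A : Matrix (Fin n) (Fin n) ℤ) (hA : IsASM n A) :
    (numNegOnes n A : ℤ) + invASM n A + invASM' n A = (n.choose 2 : ℤ) := by
  obtain ⟨hentries, hrow, hcol, -, -⟩ := hA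
  have hcol_pairs : ∀ j, ∑ p : Fin n × Fin n with p.1 < p.2, A p.1 j * A p.2 j
      = -#{i | A i j = -1} := fun j =>
    sum_filter_lt_mul_eq_neg_card (fun i => hentries i j) (hcol j)
  rw [add_assoc, invASM_add_invASM', sum_filter_row_lt_eq_sum_mul_rowSum,
    sum_filter_row_lt_col_eq_sum_col]
  simp only [hrow, mul_one, sum_const, Fintype.card_product_filter_lt, Fintype.card_fin, hcol_pairs,
    sum_neg_distrib, numNegOnes_eq_sum_card_col]
  push_cast
  ring
end

section
/- The number of modified balanced partitions of size n is the n-th Catalan number C_n = (1/(n+1))·C(2n,n). -/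
/-!
Record a partition inside the `n × n` box by its diagonal lengths: `R k` cells of content `k` and
`S k` cells of content `-k`. Both sequences fall by steps of at most one from the common value
`R 0 = S 0` (the side of the Durfee square) to `0`, and they determine the partition: the cell
`(i, c)` is present iff `i < R (c - i)` when `i ≤ c`, and iff `c < S (i - c)` when `c < i`. Since
`R k` and `S k` count the Frobenius coordinates `a_i ≥ k` and `b_i ≥ k`, the condition `a_i < b_i`
becomes `R k ≤ S (k + 1)` for all `k`. Interleaving the descents of `S` and `R` (position `2k` is
`D` iff `S` drops after `k`, position `2k + 1` is `U` iff `R` drops after `k`) turns these pairs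
into the Dyck words of semilength `n`.
-/

open Finset DyckStep

namespace BalancedPartition

structure IsProfile (n : ℕ) (R : ℕ → ℕ) : Prop where
  succ_le (k : ℕ) : R (k + 1) ≤ R k
  le_succ_add_one (k : ℕ) : R k ≤ R (k + 1) + 1
  eq_zero {k : ℕ} : n ≤ k → R k = 0

namespace IsProfile

variable {n : ℕ} {R : ℕ → ℕ}

theorem antitone (h : IsProfile n R) : Antitone R := antitone_nat_of_succ_le h.succ_le

theorem le_add_sub (h : IsProfile n R) {j k : ℕ} (hjk : j ≤ k) : R j ≤ R k + (k - j) := by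
  induction k, hjk using Nat.le_induction with
  | base => simp
  | succ k hjk ih => have := h.le_succ_add_one k; omega

theorem le_sub (h : IsProfile n R) (k : ℕ) : R k ≤ n - k := by
  rcases le_or_gt n k with hnk | hkn
  · simp [h.eq_zero hnk]
  · have := h.le_add_sub hkn.le
    rw [h.eq_zero le_rfl] at this
    omega

end IsProfile

theorem card_filter_Ico_eq_succ_add {n k : ℕ} (hk : k < n) (p : ℕ → Prop) [DecidablePred p] :
    #{j ∈ Ico k n | p j} = #{j ∈ Ico (k + 1) n | p j} + if p k then 1 else 0 := by
  rw [← insert_Ico_add_one_left_eq_Ico hk, filter_insert]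
  split_ifs <;> simp

theorem isProfile_card_filter_Ico (n : ℕ) (p : ℕ → Prop) [DecidablePred p] :
    IsProfile n fun k => #{j ∈ Ico k n | p j} where
  succ_le k := card_le_card (filter_subset_filter _ (Ico_subset_Ico_left k.le_succ))
  le_succ_add_one k := by
    rcases lt_or_ge k n with hk | hk
    · rw [card_filter_Ico_eq_succ_add hk]
      split_ifs <;> omega
    · simp [Ico_eq_empty_of_le hk]
  eq_zero hk := by simp [Ico_eq_empty_of_le hk]

theorem IsProfile.card_filter_Ico_lt {n : ℕ} {R : ℕ → ℕ} (h : IsProfile n R) (k : ℕ) :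
    #{j ∈ Ico k n | R (j + 1) < R j} = R k := by
  induction hd : n - k generalizing k with
  | zero => simp [Ico_eq_empty_of_le (by omega : n ≤ k), h.eq_zero (by omega : n ≤ k)]
  | succ d ih =>
    rw [card_filter_Ico_eq_succ_add (by omega), ih (k + 1) (by omega)]
    have := h.succ_le k
    have := h.le_succ_add_one k
    split_ifs <;> omega

variable {n : ℕ}

def conj (g : Fin n → ℕ) (j : Fin n) : ℕ := #{i | (j : ℕ) + 1 ≤ g i}

def diagLen (g : Fin n → ℕ) (k : ℕ) : ℕ := #{i : Fin n | k + i + 1 ≤ g i}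

/-- For `i` inside the Durfee square, `g i - i - 1` and `conj g i - i - 1` are the Frobenius
coordinates `a_{i+1}` and `b_{i+1}`. -/
def IsModBalanced (g : Fin n → ℕ) : Prop := ∀ i : Fin n, (i : ℕ) + 1 ≤ g i → g i < conj g i

section Diagonals

variable {g : Fin n → ℕ}

theorem lt_conj_iff (hg : Antitone g) (i j : Fin n) : (i : ℕ) < conj g j ↔ (j : ℕ) + 1 ≤ g i :=
  Fin.lt_card_filter_univ_iff_apply_of_imp _ fun _ _ hba h => h.trans (hg hba)

theorem lt_diagLen_iff (hg : Antitone g) (i : Fin n) (k : ℕ) :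
    (i : ℕ) < diagLen g k ↔ k + i + 1 ≤ g i :=
  Fin.lt_card_filter_univ_iff_apply_of_imp _ fun a b hba h => by
    have := hg hba
    have : (b : ℕ) ≤ a := hba
    omega

theorem conj_le (g : Fin n → ℕ) (j : Fin n) : conj g j ≤ n :=
  (card_filter_le _ _).trans_eq (card_fin n)

theorem diagLen_le (g : Fin n → ℕ) (k : ℕ) : diagLen g k ≤ n :=
  (card_filter_le _ _).trans_eq (card_fin n)

theorem antitone_conj (g : Fin n → ℕ) : Antitone (conj g) := fun a b hab =>
  card_le_card fun i hi => by
    simp only [mem_filter, mem_univ, true_and] at hi ⊢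
    exact le_trans (by simpa using hab) hi

theorem isProfile_diagLen (hg : Antitone g) (hgn : ∀ i, g i ≤ n) : IsProfile n (diagLen g) where
  succ_le k := card_le_card fun i hi => by
    simp only [mem_filter, mem_univ, true_and] at hi ⊢
    omega
  le_succ_add_one k := by
    by_contra! hlt
    set m := diagLen g (k + 1)
    have hm : m + 1 < n := hlt.trans_le (diagLen_le g k)
    have h1 := (lt_diagLen_iff hg ⟨m + 1, hm⟩ k).mp hlt
    have h2 := hg (Fin.mk_le_mk.mpr m.le_succ : (⟨m, by omega⟩ : Fin n) ≤ ⟨m + 1, hm⟩)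
    have h3 := (lt_diagLen_iff hg ⟨m, by omega⟩ (k + 1)).not.mp (lt_irrefl m)
    simp only at h1 h3
    omega
  eq_zero hk := card_eq_zero.mpr (filter_eq_empty_iff.mpr fun i _ => by have := hgn i; omega)

theorem diagLen_conj_zero (hg : Antitone g) : diagLen (conj g) 0 = diagLen g 0 := by
  unfold diagLen
  congr 1
  refine filter_congr fun i _ => ?_
  rw [zero_add, Nat.add_one_le_iff, lt_conj_iff hg]

theorem isModBalanced_iff (hg : Antitone g) :
    IsModBalanced g ↔ ∀ k, diagLen g k ≤ diagLen (conj g) (k + 1) := by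
  refine ⟨fun hb k => card_le_card fun i hi => ?_, fun hle i hi => ?_⟩
  · simp only [mem_filter, mem_univ, true_and] at hi ⊢
    have := hb i (by omega)
    omega
  · obtain ⟨k, hk⟩ : ∃ k, g i = k + i + 1 := ⟨g i - i - 1, by omega⟩
    have := (lt_diagLen_iff (antitone_conj g) i (k + 1)).mp
      (((lt_diagLen_iff hg i k).mpr hk.ge).trans_le (hle k))
    omega

end Diagonals

def InDiagram (R S : ℕ → ℕ) (i c : ℕ) : Prop :=
  if i ≤ c then i < R (c - i) else c < S (i - c)

instance (R S : ℕ → ℕ) (i c : ℕ) : Decidable (InDiagram R S i c) := by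
  unfold InDiagram; infer_instance

structure IsBalancedPair (n : ℕ) (R S : ℕ → ℕ) : Prop where
  fst : IsProfile n R
  snd : IsProfile n S
  zero_eq : R 0 = S 0
  le_succ (k : ℕ) : R k ≤ S (k + 1)

section InDiagram

variable {R S : ℕ → ℕ}

theorem inDiagram_swap (h0 : R 0 = S 0) (i c : ℕ) : InDiagram S R c i ↔ InDiagram R S i c := by
  unfold InDiagram
  rcases lt_trichotomy i c with h | rfl | h
  · rw [if_neg (by omega), if_pos h.le]
  · simp [h0]
  · rw [if_pos h.le, if_neg (by omega)]

theorem inDiagram_of_succ_right (hR : IsProfile n R) (hS : IsProfile n S) (h0 : R 0 = S 0)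
    {i c : ℕ} (h : InDiagram R S i (c + 1)) : InDiagram R S i c := by
  unfold InDiagram at h ⊢
  rcases lt_trichotomy c i with hci | rfl | hci
  · rw [if_neg (by omega)]
    by_cases hc : c + 1 = i
    · subst hc
      rw [if_pos le_rfl, Nat.sub_self] at h
      have := hS.le_succ_add_one 0
      rw [zero_add] at this
      simp only [Nat.add_sub_cancel_left]
      omega
    · rw [if_neg (by omega)] at h
      have := hS.le_succ_add_one (i - (c + 1))
      rw [show i - (c + 1) + 1 = i - c by omega] at this
      omega
  all_goals
    rw [if_pos (by omega)] at h ⊢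
    exact h.trans_le (hR.antitone (by omega))

namespace IsBalancedPair

variable (h : IsBalancedPair n R S)
include h

theorem antitone_inDiagram_right {i : ℕ} : Antitone (InDiagram R S i) :=
  antitone_nat_of_succ_le fun _ => inDiagram_of_succ_right h.fst h.snd h.zero_eq

theorem antitone_inDiagram_left {c : ℕ} : Antitone fun i => InDiagram R S i c :=
  antitone_nat_of_succ_le fun _ hi => (inDiagram_swap h.zero_eq _ _).mp
    (inDiagram_of_succ_right h.snd h.fst h.zero_eq.symm ((inDiagram_swap h.zero_eq _ _).mpr hi))

theorem not_inDiagram {i c : ℕ} (hc : n ≤ c) : ¬ InDiagram R S i c := by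
  unfold InDiagram
  have := h.fst.le_sub (c - i)
  have := h.snd.le_sub (i - c)
  split_ifs <;> omega

end IsBalancedPair

end InDiagram

def ofPair (n : ℕ) (R S : ℕ → ℕ) (i : Fin n) : ℕ := #{c : Fin n | InDiagram R S i c}

theorem ofPair_le (R S : ℕ → ℕ) (i : Fin n) : ofPair n R S i ≤ n :=
  (card_filter_le _ _).trans_eq (card_fin n)

namespace IsBalancedPair

variable {R S : ℕ → ℕ} (h : IsBalancedPair n R S)
include h

theorem lt_ofPair_iff (i : Fin n) (c : ℕ) : c < ofPair n R S i ↔ InDiagram R S i c := by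
  rcases lt_or_ge c n with hc | hc
  · exact Fin.lt_card_filter_univ_iff_apply_of_imp (j := ⟨c, hc⟩) _
      fun _ _ hba => h.antitone_inDiagram_right hba
  · exact iff_of_false (by have := ofPair_le R S i; omega)
      (h.not_inDiagram hc)

theorem antitone_ofPair : Antitone (ofPair n R S) := fun a b hab =>
  card_le_card fun c hc => by
    simp only [mem_filter, mem_univ, true_and] at hc ⊢
    exact h.antitone_inDiagram_left hab hc

theorem ofPair_lt (i : Fin n) : ofPair n R S i < n := by
  by_contra! hle
  have := i.isLt
  have hcell := (h.lt_ofPair_iff i (n - 1)).mp (by omega)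
  rw [InDiagram, if_pos (by omega)] at hcell
  have := h.le_succ (n - 1 - i)
  have := h.snd.le_sub (n - 1 - i + 1)
  omega

theorem diagLen_ofPair (k : ℕ) : diagLen (ofPair n R S) k = R k := by
  have key (i : Fin n) : k + i + 1 ≤ ofPair n R S i ↔ (i : ℕ) < R k := by
    rw [Nat.add_one_le_iff, h.lt_ofPair_iff, InDiagram, if_pos (by omega), Nat.add_sub_cancel]
  rw [diagLen, filter_congr fun i _ => key i, Fin.card_filter_val_lt,
    min_eq_right ((h.fst.le_sub k).trans (Nat.sub_le n k))]

theorem diagLen_conj_ofPair (k : ℕ) : diagLen (conj (ofPair n R S)) k = S k := by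
  have key (j : Fin n) : k + j + 1 ≤ conj (ofPair n R S) j ↔ (j : ℕ) < S k := by
    have hcell : InDiagram R S (k + j) j ↔ (j : ℕ) < S k := by
      unfold InDiagram
      split_ifs with hk
      · obtain rfl : k = 0 := by omega
        simp [h.zero_eq]
      · rw [Nat.add_sub_cancel]
    constructor
    · intro hle
      have hkj : k + j < n := by have := conj_le (ofPair n R S) j; omega
      rw [← hcell, ← h.lt_ofPair_iff ⟨k + j, hkj⟩, ← Nat.add_one_le_iff,
        ← lt_conj_iff h.antitone_ofPair]
      exact hle
    · intro hj
      have hkj : k + j < n := by have := h.snd.le_sub k; omega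
      exact (lt_conj_iff h.antitone_ofPair ⟨k + j, hkj⟩ j).mpr
        (Nat.add_one_le_iff.mpr ((h.lt_ofPair_iff _ _).mpr (hcell.mpr hj)))
  rw [diagLen, filter_congr fun j _ => key j, Fin.card_filter_val_lt,
    min_eq_right ((h.snd.le_sub k).trans (Nat.sub_le n k))]

end IsBalancedPair

theorem ofPair_diagLen {g : Fin n → ℕ} (hg : Antitone g) (hgn : ∀ i, g i ≤ n) :
    ofPair n (diagLen g) (diagLen (conj g)) = g := by
  funext i
  have key (c : Fin n) : InDiagram (diagLen g) (diagLen (conj g)) i c ↔ (c : ℕ) < g i := by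
    unfold InDiagram
    split_ifs with hic
    · rw [lt_diagLen_iff hg]
      omega
    · rw [lt_diagLen_iff (antitone_conj g), show (i : ℕ) - c + c + 1 = i + 1 by omega,
        Nat.add_one_le_iff, lt_conj_iff hg]
      omega
  rw [ofPair, filter_congr fun c _ => key c, Fin.card_filter_val_lt, min_eq_right (hgn i)]

theorem isBalancedPair_diagLen {g : Fin n → ℕ} (hg : Antitone g) (hgn : ∀ i, g i ≤ n)
    (hb : IsModBalanced g) : IsBalancedPair n (diagLen g) (diagLen (conj g)) where
  fst := isProfile_diagLen hg hgn
  snd := isProfile_diagLen (antitone_conj g) (conj_le g)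
  zero_eq := (diagLen_conj_zero hg).symm
  le_succ := (isModBalanced_iff hg).mp hb

def partitionEquivBalancedPair (n : ℕ) :
    {f : Fin n → Fin n // Antitone f ∧ IsModBalanced fun i => (f i : ℕ)} ≃
      {p : (ℕ → ℕ) × (ℕ → ℕ) // IsBalancedPair n p.1 p.2} where
  toFun f := ⟨(diagLen fun i => f.1 i, diagLen (conj fun i => f.1 i)),
    isBalancedPair_diagLen f.2.1 (fun i => (f.1 i).isLt.le) f.2.2⟩
  invFun p := ⟨fun i => ⟨ofPair n p.1.1 p.1.2 i, p.2.ofPair_lt i⟩,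
    fun _ _ hab => p.2.antitone_ofPair hab,
    (isModBalanced_iff p.2.antitone_ofPair).mpr fun k => by
      rw [p.2.diagLen_ofPair, p.2.diagLen_conj_ofPair]
      exact p.2.le_succ k⟩
  left_inv f := Subtype.ext <| funext fun i => Fin.ext <|
    congrFun (ofPair_diagLen f.2.1 fun i => (f.1 i).isLt.le) i
  right_inv p := Subtype.ext <| Prod.ext (funext p.2.diagLen_ofPair)
    (funext p.2.diagLen_conj_ofPair)

section DyckWords

variable {R S : ℕ → ℕ}

def pairWord (R S : ℕ → ℕ) : ℕ → List DyckStep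
  | 0 => []
  | m + 1 => pairWord R S m ++ [if S (m + 1) < S m then D else U, if R (m + 1) < R m then U else D]

theorem length_pairWord (m : ℕ) : (pairWord R S m).length = 2 * m := by
  induction m with
  | zero => rfl
  | succ m ih => simp [pairWord, ih]; omega

theorem take_pairWord_two_mul {k m : ℕ} (hkm : k ≤ m) :
    (pairWord R S m).take (2 * k) = pairWord R S k := by
  induction m, hkm using Nat.le_induction with
  | base => exact List.take_of_length_le (length_pairWord k).le
  | succ m hkm ih =>
    rw [pairWord, List.take_append_of_le_length (by rw [length_pairWord]; omega), ih]

theorem take_pairWord_two_mul_add_one {k m : ℕ} (hkm : k < m) :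
    (pairWord R S m).take (2 * k + 1) = pairWord R S k ++ [if S (k + 1) < S k then D else U] := by
  rw [← min_eq_left (by omega : 2 * k + 1 ≤ 2 * (k + 1)), ← List.take_take,
    take_pairWord_two_mul hkm, pairWord, List.take_append, length_pairWord,
    List.take_of_length_le (by rw [length_pairWord]; omega)]
  simp

theorem getD_pairWord_two_mul {j m : ℕ} (hjm : j < m) :
    (pairWord R S m).getD (2 * j) U = if S (j + 1) < S j then D else U := by
  have h := congrArg (List.getD · (2 * j) U) (take_pairWord_two_mul_add_one (R := R) (S := S) hjm)
  simpa [List.getD_eq_getElem?_getD, List.getElem?_append_right, length_pairWord] using h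

theorem getD_pairWord_two_mul_add_one {j m : ℕ} (hjm : j < m) :
    (pairWord R S m).getD (2 * j + 1) U = if R (j + 1) < R j then U else D := by
  have h := congrArg (List.getD · (2 * j + 1) U) (take_pairWord_two_mul (R := R) (S := S) hjm)
  have hlt : 2 * j + 1 < 2 * (j + 1) := by omega
  simpa [List.getD_eq_getElem?_getD, List.getElem?_take, hlt, List.getElem?_append_right,
    length_pairWord, pairWord] using h

theorem count_pairWord (hR : IsProfile n R) (hS : IsProfile n S) (m : ℕ) :
    (pairWord R S m).count U + S 0 + R m = m + S m + R 0 ∧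
      (pairWord R S m).count D + R 0 + S m = m + R m + S 0 := by
  induction m with
  | zero => simp [pairWord]
  | succ m ih =>
    obtain ⟨ih₁, ih₂⟩ := ih
    have := hR.succ_le m
    have := hR.le_succ_add_one m
    have := hS.succ_le m
    have := hS.le_succ_add_one m
    by_cases hSm : S (m + 1) < S m <;> by_cases hRm : R (m + 1) < R m <;>
      simp [pairWord, hSm, hRm] <;> omega

theorem pairWord_isDyck_iff (hR : IsProfile n R) (hS : IsProfile n S) :
    ((pairWord R S n).count U = (pairWord R S n).count D ∧
      ∀ i, ((pairWord R S n).take i).count D ≤ ((pairWord R S n).take i).count U) ↔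
    R 0 = S 0 ∧ ∀ k, R k ≤ S (k + 1) := by
  have hcount := count_pairWord hR hS
  have hRn := hR.eq_zero (le_refl n)
  have hSn := hS.eq_zero (le_refl n)
  constructor
  · rintro ⟨hbal, hpre⟩
    have h0 : R 0 = S 0 := by have := hcount n; omega
    refine ⟨h0, fun k => ?_⟩
    rcases lt_or_ge k n with hk | hk
    · have hp := hpre (2 * k + 1)
      rw [take_pairWord_two_mul_add_one hk] at hp
      have := hcount k
      have := hS.succ_le k
      have := hS.le_succ_add_one k
      by_cases hSk : S (k + 1) < S k <;> simp [hSk] at hp <;> omega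
    · rw [hR.eq_zero hk]; exact Nat.zero_le _
  · rintro ⟨h0, hle⟩
    refine ⟨by have := hcount n; omega, fun i => ?_⟩
    rcases lt_or_ge i (2 * n) with hi | hi
    · obtain ⟨k, rfl | rfl⟩ := Nat.even_or_odd' i
      · rw [take_pairWord_two_mul (by omega)]
        have := hcount k
        have := hle k
        have := hS.succ_le k
        omega
      · rw [take_pairWord_two_mul_add_one (by omega)]
        have := hcount k
        have := hle k
        have := hS.succ_le k
        have := hS.le_succ_add_one k
        by_cases hSk : S (k + 1) < S k <;> simp [hSk] <;> omega
    · rw [List.take_of_length_le (by rw [length_pairWord]; omega)]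
      have := hcount n
      omega

def oddProfile (n : ℕ) (l : List DyckStep) (k : ℕ) : ℕ :=
  #{j ∈ Ico k n | l.getD (2 * j + 1) U = U}

def evenProfile (n : ℕ) (l : List DyckStep) (k : ℕ) : ℕ :=
  #{j ∈ Ico k n | l.getD (2 * j) U = D}

theorem isProfile_oddProfile (n : ℕ) (l : List DyckStep) : IsProfile n (oddProfile n l) :=
  isProfile_card_filter_Ico n _

theorem isProfile_evenProfile (n : ℕ) (l : List DyckStep) : IsProfile n (evenProfile n l) :=
  isProfile_card_filter_Ico n _

theorem oddProfile_succ_lt_iff {l : List DyckStep} {j : ℕ} (hj : j < n) :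
    oddProfile n l (j + 1) < oddProfile n l j ↔ l.getD (2 * j + 1) U = U := by
  rw [oddProfile, oddProfile, card_filter_Ico_eq_succ_add hj]
  split_ifs with h
  exacts [iff_of_true (by omega) h, iff_of_false (by omega) h]

theorem evenProfile_succ_lt_iff {l : List DyckStep} {j : ℕ} (hj : j < n) :
    evenProfile n l (j + 1) < evenProfile n l j ↔ l.getD (2 * j) U = D := by
  rw [evenProfile, evenProfile, card_filter_Ico_eq_succ_add hj]
  split_ifs with h
  exacts [iff_of_true (by omega) h, iff_of_false (by omega) h]

theorem oddProfile_pairWord (hR : IsProfile n R) (S : ℕ → ℕ) :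
    oddProfile n (pairWord R S n) = R := funext fun k => by
  rw [oddProfile, ← hR.card_filter_Ico_lt k]
  refine congrArg card (filter_congr fun j hj => ?_)
  rw [getD_pairWord_two_mul_add_one (mem_Ico.mp hj).2]
  split_ifs <;> simp [*]

theorem evenProfile_pairWord (R : ℕ → ℕ) (hS : IsProfile n S) :
    evenProfile n (pairWord R S n) = S := funext fun k => by
  rw [evenProfile, ← hS.card_filter_Ico_lt k]
  refine congrArg card (filter_congr fun j hj => ?_)
  rw [getD_pairWord_two_mul (mem_Ico.mp hj).2]
  split_ifs <;> simp [*]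

theorem pairWord_oddProfile_evenProfile {l : List DyckStep} (hl : l.length = 2 * n) :
    pairWord (oddProfile n l) (evenProfile n l) n = l := by
  refine List.ext_getElem (by rw [length_pairWord, hl]) fun i hi _ => ?_
  rw [length_pairWord] at hi
  rw [← List.getD_eq_getElem _ U, ← List.getD_eq_getElem _ U]
  obtain ⟨j, rfl | rfl⟩ := Nat.even_or_odd' i
  · rw [getD_pairWord_two_mul (by omega), if_congr (evenProfile_succ_lt_iff (by omega)) rfl rfl]
    rcases DyckStep.dichotomy (l.getD (2 * j) U) with h | h <;> rw [h] <;> rfl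
  · rw [getD_pairWord_two_mul_add_one (by omega),
      if_congr (oddProfile_succ_lt_iff (by omega)) rfl rfl]
    rcases DyckStep.dichotomy (l.getD (2 * j + 1) U) with h | h <;> rw [h] <;> rfl

end DyckWords

theorem isBalancedPair_profiles (p : DyckWord) (hp : p.semilength = n) :
    IsBalancedPair n (oddProfile n p.toList) (evenProfile n p.toList) := by
  have hR := isProfile_oddProfile n p.toList
  have hS := isProfile_evenProfile n p.toList
  have hl : p.toList.length = 2 * n := by rw [← p.two_mul_semilength_eq_length, hp]
  obtain ⟨h0, hle⟩ := (pairWord_isDyck_iff hR hS).mp <| by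
    rw [pairWord_oddProfile_evenProfile hl]
    exact ⟨p.count_U_eq_count_D, p.count_D_le_count_U⟩
  exact ⟨hR, hS, h0, hle⟩

namespace IsBalancedPair

variable {R S : ℕ → ℕ} (h : IsBalancedPair n R S)

def toDyckWord : DyckWord where
  toList := pairWord R S n
  count_U_eq_count_D := ((pairWord_isDyck_iff h.fst h.snd).mpr ⟨h.zero_eq, h.le_succ⟩).1
  count_D_le_count_U := ((pairWord_isDyck_iff h.fst h.snd).mpr ⟨h.zero_eq, h.le_succ⟩).2

theorem semilength_toDyckWord : h.toDyckWord.semilength = n := by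
  have := (count_pairWord h.fst h.snd n).1
  have := h.fst.eq_zero le_rfl
  have := h.snd.eq_zero le_rfl
  have := h.zero_eq
  change (pairWord R S n).count U = n
  omega

end IsBalancedPair

def balancedPairEquivDyckWord (n : ℕ) :
    {p : (ℕ → ℕ) × (ℕ → ℕ) // IsBalancedPair n p.1 p.2} ≃ {p : DyckWord // p.semilength = n} where
  toFun p := ⟨p.2.toDyckWord, p.2.semilength_toDyckWord⟩
  invFun p := ⟨(oddProfile n p.1.toList, evenProfile n p.1.toList),
    isBalancedPair_profiles p.1 p.2⟩
  left_inv p := Subtype.ext <| Prod.ext (oddProfile_pairWord p.2.fst _)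
    (evenProfile_pairWord _ p.2.snd)
  right_inv p := Subtype.ext <| DyckWord.ext <| pairWord_oddProfile_evenProfile <| by
    rw [← p.1.two_mul_semilength_eq_length, p.2]

end BalancedPartition

/-- Modified balanced partitions of size `n` (partitions with at most `n` parts, each part
at most `n-1`, here encoded as weakly decreasing functions `Fin n → Fin n`, such that
`λ_i < λ'_i` whenever `λ_i ≥ i`) are counted by the `n`-th Catalan number. -/
theorem stmt_5 (n : ℕ) :
    Nat.card {f : Fin n → Fin n //
        (∀ i j : Fin n, i ≤ j → f j ≤ f i) ∧
        (∀ i : Fin n, (i : ℕ) + 1 ≤ (f i : ℕ) →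
          (f i : ℕ) <
            ((Finset.univ : Finset (Fin n)).filter
              (fun j => (i : ℕ) + 1 ≤ (f j : ℕ))).card)} = catalan n := by
  calc _ = Nat.card {p : DyckWord // p.semilength = n} :=
        Nat.card_congr <| (BalancedPartition.partitionEquivBalancedPair n).trans
          (BalancedPartition.balancedPairEquivDyckWord n)
    _ = catalan n := by
      rw [Nat.card_eq_fintype_card, DyckWord.card_dyckWord_semilength_eq_catalan]
end

section
/- The map sending a non-empty modified balanced partition of size n with Frobenius notation (a_1,…,a_l | b_1,…,b_l) to the lattice path N^{b_l} E^{a_l+1} N^{b_{l−1}−b_l} E^{a_{l−1}−a_l} ⋯ N^{b_1−b_2} E^{a_1−a_2} N^{n−b_1} E^{n−a_1−1} (and sending the empty partition to N^n E^n) is a bijection from modified balanced partitions of size n to Dyck paths from (0,0) to (n,n), i.e. lattice paths with n north steps and n east steps that stay weakly above the diagonal. -/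
/-- A modified balanced partition of size `n`, given in Frobenius notation
`(a_1,…,a_l | b_1,…,b_l)`: strictly decreasing non-negative arm lengths `a` and leg
lengths `b` with `a_i < b_i` (the defining condition), at most `n` parts (`b_1 + 1 ≤ n`,
i.e. `b i + 1 ≤ n`) and largest part at most `n − 1` (`a_1 + 1 ≤ n − 1`, i.e.
`a i + 2 ≤ n`).  The empty partition corresponds to `l = 0`. -/
structure ModBalanced (n : ℕ) where
  l : ℕ
  a : Fin l → ℕ
  b : Fin l → ℕ
  ha : StrictAnti a
  hb : StrictAnti b
  hab : ∀ i, a i < b i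
  hbn : ∀ i, b i + 1 ≤ n
  han : ∀ i, a i + 2 ≤ n

/-- The extended arm sequence: `ea 0 = n`, `ea i = a_i + 1` for `1 ≤ i ≤ l`, `ea i = 0`
for `i > l`. -/
def eA {n : ℕ} (m : ModBalanced n) : ℕ → ℕ := fun i =>
  if h0 : i = 0 then n else if h : i ≤ m.l then m.a ⟨i - 1, by omega⟩ + 1 else 0

/-- The extended leg sequence: `eb 0 = n`, `eb i = b_i` for `1 ≤ i ≤ l`, `eb i = 0`
for `i > l`. -/
def eB {n : ℕ} (m : ModBalanced n) : ℕ → ℕ := fun i =>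
  if h0 : i = 0 then n else if h : i ≤ m.l then m.b ⟨i - 1, by omega⟩ else 0

/-- The lattice path `N^{b_l} E^{a_l+1} N^{b_{l−1}−b_l} E^{a_{l−1}−a_l} ⋯
N^{b_1−b_2} E^{a_1−a_2} N^{n−b_1} E^{n−a_1−1}` (with `N` = `true`, `E` = `false`);
for the empty partition it is `N^n E^n`. -/
def toPath {n : ℕ} (m : ModBalanced n) : List Bool :=
  ((List.range (m.l + 1)).reverse).flatMap (fun i =>
    List.replicate (eB m i - eB m (i + 1)) true ++
      List.replicate (eA m i - eA m (i + 1)) false)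

/-- Dyck paths from `(0,0)` to `(n,n)`: `n` north and `n` east steps, every prefix having
at least as many north steps as east steps (weakly above the diagonal). -/
def IsDyck (n : ℕ) (p : List Bool) : Prop :=
  p.length = 2 * n ∧ p.count true = n ∧
  ∀ k, ((p.take k).count false) ≤ (p.take k).count true

/-
A path that starts with `N` and ends with `E` is, in exactly one way, a staircase
`N^{c₁} E^{d₁} ⋯ N^{c_k} E^{d_k}` with all `cᵢ, dᵢ > 0`, and it stays weakly above the
diagonal iff it does so at its valleys, i.e. iff `d₁ + ⋯ + dⱼ ≤ c₁ + ⋯ + cⱼ` for every `j`.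
The path of `(a | b)` is the staircase whose valleys are the points `(a_i + 1, b_i)`: the runs are
the differences of the sequences `eB`, `eA`, and their partial sums recover `eB`, `eA`. Under this
correspondence strict decrease of `a` and `b` (together with `b_1 < n` and `a_1 + 1 < n`) is
positivity of the runs, and `a_i < b_i` is the valley condition.
-/

open List

theorem List.eq_of_map_fst_eq_of_map_snd_eq {α β : Type*} {L L' : List (α × β)}
    (h₁ : L.map Prod.fst = L'.map Prod.fst) (h₂ : L.map Prod.snd = L'.map Prod.snd) : L = L' := by
  rw [← zip_unzip L, ← zip_unzip L', unzip_fst, unzip_snd, unzip_fst, unzip_snd, h₁, h₂]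

theorem List.strictMonoOn_sum_take {L : List ℕ} (hL : ∀ x ∈ L, 0 < x) :
    StrictMonoOn (fun k => (L.take k).sum) (Set.Iic L.length) := by
  intro k _ k' hk' hk
  have hsplit := sum_take_add_sum_drop (L.take k') k
  rw [take_take, min_eq_left hk.le] at hsplit
  have : 0 < ((L.take k').drop k).sum :=
    sum_pos _ (fun x hx => hL x (mem_of_mem_take (mem_of_mem_drop hx)))
      (ne_nil_of_length_pos (by rw [length_drop, length_take]; rw [Set.mem_Iic] at hk'; omega))
  dsimp only
  omega

theorem List.sum_map_range'_tsub {E : ℕ → ℕ} (hE : Antitone E) (s k : ℕ) :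
    ((range' s k).map fun i => E i - E (i + 1)).sum = E s - E (s + k) := by
  induction k generalizing s with
  | zero => simp
  | succ k ih =>
    rw [range'_succ, map_cons, sum_cons, ih, ← add_assoc, add_right_comm]
    have := hE (show s + 1 ≤ s + k + 1 by omega)
    have := hE (show s ≤ s + 1 by omega)
    omega

theorem List.sum_take_map_reverse_range_tsub {E : ℕ → ℕ} (hE : Antitone E) (N k : ℕ) :
    (((range N).reverse.map fun i => E i - E (i + 1)).take k).sum = E (N - k) - E N := by
  rw [← map_take, take_reverse, map_reverse, sum_reverse, length_range, range_eq_range',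
    drop_range', sum_map_range'_tsub hE, zero_add, mul_one]
  congr 2
  omega

theorem List.replicate_append_inj {α : Type*} {a : α} {m m' : ℕ} {x y : List α}
    (hx : x.head? ≠ some a) (hy : y.head? ≠ some a)
    (h : replicate m a ++ x = replicate m' a ++ y) : m = m' ∧ x = y := by
  induction m generalizing m' with
  | zero =>
    cases m' with
    | zero => simpa using h
    | succ m' => subst h; simp [replicate_succ] at hx
  | succ m ih =>
    cases m' with
    | zero => subst h; simp [replicate_succ] at hy
    | succ m' =>
      simp only [replicate_succ, cons_append, cons.injEq, true_and] at h
      simpa using ih h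

def staircase (L : List (ℕ × ℕ)) : List Bool :=
  L.flatMap fun q => replicate q.1 true ++ replicate q.2 false

section staircase

theorem staircase_nil : staircase [] = [] := rfl

theorem staircase_cons (q : ℕ × ℕ) (L : List (ℕ × ℕ)) :
    staircase (q :: L) = replicate q.1 true ++ (replicate q.2 false ++ staircase L) := by
  simp [staircase]

theorem staircase_append (L₁ L₂ : List (ℕ × ℕ)) :
    staircase (L₁ ++ L₂) = staircase L₁ ++ staircase L₂ :=
  flatMap_append

theorem count_true_staircase (L : List (ℕ × ℕ)) :
    (staircase L).count true = (L.map Prod.fst).sum := by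
  simp [staircase, count_flatMap, Function.comp_def, count_replicate]

theorem count_false_staircase (L : List (ℕ × ℕ)) :
    (staircase L).count false = (L.map Prod.snd).sum := by
  simp [staircase, count_flatMap, Function.comp_def, count_replicate]

-- `s` is the height (north minus east steps) at which the staircase starts.
theorem count_false_take_staircase_le {L : List (ℕ × ℕ)} {s : ℕ}
    (h : ∀ k, ((L.map Prod.snd).take k).sum ≤ s + ((L.map Prod.fst).take k).sum) (k : ℕ) :
    ((staircase L).take k).count false ≤ s + ((staircase L).take k).count true := by
  induction L generalizing s k with
  | nil => simp [staircase_nil]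
  | cons q L ih =>
    have hq : q.2 ≤ s + q.1 := by simpa using h 1
    have hL := ih (s := s + q.1 - q.2) (k := k - q.1 - q.2) fun k => by
      have := h (k + 1)
      simp only [map_cons, take_succ_cons, sum_cons] at this
      omega
    have hlen := count_true_add_count_false ((staircase L).take (k - q.1 - q.2))
    rw [length_take] at hlen
    rw [staircase_cons, take_append, take_append]
    simp only [count_append, take_replicate, count_replicate, length_replicate, beq_false,
      Bool.not_true, Bool.false_eq_true, ↓reduceIte, BEq.rfl, zero_add, beq_true]
    omega

theorem forall_count_take_staircase_iff (L : List (ℕ × ℕ)) :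
    (∀ k, ((staircase L).take k).count false ≤ ((staircase L).take k).count true) ↔
      ∀ k, ((L.map Prod.snd).take k).sum ≤ ((L.map Prod.fst).take k).sum := by
  refine ⟨fun h k => ?_, fun h => by
    simpa using count_false_take_staircase_le (s := 0) (by simpa using h)⟩
  have hsplit : staircase L = staircase (L.take k) ++ staircase (L.drop k) := by
    rw [← staircase_append, take_append_drop]
  have := h (staircase (L.take k)).length
  rwa [hsplit, take_left, count_true_staircase, count_false_staircase, map_take, map_take] at this

theorem head?_staircase_ne {L : List (ℕ × ℕ)} (hL : ∀ q ∈ L, 0 < q.1) :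
    (staircase L).head? ≠ some false := by
  cases L with
  | nil => simp [staircase_nil]
  | cons q L => simp [staircase_cons, head?_replicate, (hL q mem_cons_self).ne']

theorem staircase_injOn {L₁ L₂ : List (ℕ × ℕ)} (h₁ : ∀ q ∈ L₁, 0 < q.1 ∧ 0 < q.2)
    (h₂ : ∀ q ∈ L₂, 0 < q.1 ∧ 0 < q.2) (h : staircase L₁ = staircase L₂) : L₁ = L₂ := by
  induction L₁ generalizing L₂ with
  | nil =>
    cases L₂ with
    | nil => rfl
    | cons q L₂ => simp [staircase_nil, staircase_cons, (h₂ q mem_cons_self).1.ne'] at h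
  | cons q₁ L₁ ih =>
    cases L₂ with
    | nil => simp [staircase_nil, staircase_cons, (h₁ q₁ mem_cons_self).1.ne'] at h
    | cons q₂ L₂ =>
      obtain ⟨-, hd₁⟩ := h₁ q₁ mem_cons_self
      obtain ⟨-, hd₂⟩ := h₂ q₂ mem_cons_self
      have t₁ : ∀ q ∈ L₁, 0 < q.1 ∧ 0 < q.2 := fun q hq => h₁ q (mem_cons_of_mem _ hq)
      have t₂ : ∀ q ∈ L₂, 0 < q.1 ∧ 0 < q.2 := fun q hq => h₂ q (mem_cons_of_mem _ hq)
      rw [staircase_cons, staircase_cons] at h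
      obtain ⟨hc, h⟩ := replicate_append_inj (by simp [head?_replicate, hd₁.ne'])
        (by simp [head?_replicate, hd₂.ne']) h
      obtain ⟨hd, h⟩ := replicate_append_inj (head?_staircase_ne fun q hq => (t₁ q hq).1)
        (head?_staircase_ne fun q hq => (t₂ q hq).1) h
      rw [Prod.ext hc hd, ih t₁ t₂ h]

theorem exists_staircase_eq (w : List Bool) {c : ℕ} (hc : 0 < c) (d : ℕ) :
    ∃ L, (∀ q ∈ L, 0 < q.1 ∧ 0 < q.2) ∧
      staircase L = replicate c true ++ replicate d false ++ (w ++ [false]) := by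
  induction w generalizing c d with
  | nil => exact ⟨[(c, d + 1)], by simpa using hc, by simp [staircase, replicate_succ']⟩
  | cons x w ih =>
    cases x with
    | false =>
      obtain ⟨L, hL, hLw⟩ := ih hc (d + 1)
      exact ⟨L, hL, by simp [hLw, replicate_succ']⟩
    | true =>
      cases d with
      | zero =>
        obtain ⟨L, hL, hLw⟩ := ih c.succ_pos 0
        exact ⟨L, hL, by simp [hLw, replicate_succ']⟩
      | succ d =>
        obtain ⟨L, hL, hLw⟩ := ih one_pos 0
        refine ⟨(c, d + 1) :: L, ?_, ?_⟩
        · simpa [hc] using hL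
        · simp [staircase_cons, hLw]

end staircase

def extendSeq (n : ℕ) {l : ℕ} (c : Fin l → ℕ) : ℕ → ℕ := fun i =>
  if h0 : i = 0 then n else if h : i ≤ l then c ⟨i - 1, by omega⟩ else 0

section extendSeq

variable {n l : ℕ} {c : Fin l → ℕ}

@[simp] theorem extendSeq_zero : extendSeq n c 0 = n := rfl

@[simp] theorem extendSeq_succ (i : Fin l) : extendSeq n c (i + 1) = c i := by
  simp [extendSeq, Nat.succ_le_of_lt i.isLt]

theorem extendSeq_of_lt {j : ℕ} (h : l < j) : extendSeq n c j = 0 := by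
  simp [extendSeq, h.not_ge, show j ≠ 0 by omega]

theorem extendSeq_le_extendSeq {c' : Fin l → ℕ} (h : ∀ i, c i ≤ c' i) (j : ℕ) :
    extendSeq n c j ≤ extendSeq n c' j := by
  unfold extendSeq
  split_ifs <;> simp [h]

theorem antitone_extendSeq (hc : StrictAnti c) (hcn : ∀ i, c i ≤ n) :
    Antitone (extendSeq n c) := by
  refine antitone_nat_of_succ_le fun j => ?_
  rcases lt_or_ge l (j + 1) with hj | hj
  · simp [extendSeq_of_lt hj]
  rcases j with _ | j
  · simpa using extendSeq_succ (n := n) (c := c) ⟨0, hj⟩ ▸ hcn _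
  · rw [extendSeq_succ (c := c) ⟨j + 1, hj⟩, extendSeq_succ (c := c) ⟨j, by omega⟩]
    exact (hc (Fin.mk_lt_mk.2 j.lt_succ_self)).le

theorem extendSeq_succ_lt (hc : StrictAnti c) (hcn : ∀ i, c i < n) (hc0 : ∀ i, 0 < c i)
    (hn : 0 < n) {j : ℕ} (hj : j ≤ l) : extendSeq n c (j + 1) < extendSeq n c j := by
  rcases j with _ | j
  · rcases l.eq_zero_or_pos with rfl | hl
    · simpa [extendSeq_of_lt] using hn
    · simpa using extendSeq_succ (n := n) (c := c) ⟨0, hl⟩ ▸ hcn _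
  rcases hj.lt_or_eq with hj | rfl
  · rw [extendSeq_succ (c := c) ⟨j + 1, hj⟩, extendSeq_succ (c := c) ⟨j, by omega⟩]
    exact hc (Fin.mk_lt_mk.2 j.lt_succ_self)
  · rw [extendSeq_of_lt (lt_add_one _), extendSeq_succ (c := c) ⟨j, j.lt_succ_self⟩]
    exact hc0 _

theorem extendSeq_sub_eq {F : ℕ → ℕ} (h0 : F 0 = 0) (hl : F (l + 1) = n) (j : ℕ) :
    extendSeq n (fun i : Fin l => F (l - i)) j = F (l + 1 - j) := by
  unfold extendSeq
  split_ifs with h₁ h₂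
  · simp [h₁, hl]
  · change F (l - (j - 1)) = F (l + 1 - j)
    congr 1
    omega
  · rw [show l + 1 - j = 0 by omega, h0]

end extendSeq

section ModBalanced

variable {n : ℕ} (m : ModBalanced n)

theorem eA_eq_extendSeq : eA m = extendSeq n fun i => m.a i + 1 := rfl

theorem eB_eq_extendSeq : eB m = extendSeq n m.b := rfl

@[simp] theorem eA_zero : eA m 0 = n := rfl

@[simp] theorem eB_zero : eB m 0 = n := rfl

@[simp] theorem eA_succ (i : Fin m.l) : eA m (i + 1) = m.a i + 1 := by
  rw [eA_eq_extendSeq, extendSeq_succ]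

@[simp] theorem eB_succ (i : Fin m.l) : eB m (i + 1) = m.b i := by
  rw [eB_eq_extendSeq, extendSeq_succ]

theorem eA_of_lt {j : ℕ} (h : m.l < j) : eA m j = 0 := by
  rw [eA_eq_extendSeq, extendSeq_of_lt h]

theorem eB_of_lt {j : ℕ} (h : m.l < j) : eB m j = 0 := by
  rw [eB_eq_extendSeq, extendSeq_of_lt h]

theorem antitone_eA : Antitone (eA m) :=
  antitone_extendSeq (fun _ _ h => Nat.succ_lt_succ (m.ha h)) fun i => by have := m.han i; omega

theorem antitone_eB : Antitone (eB m) :=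
  antitone_extendSeq m.hb fun i => by have := m.hbn i; omega

theorem eA_succ_lt (hn : 0 < n) {j : ℕ} (hj : j ≤ m.l) : eA m (j + 1) < eA m j :=
  extendSeq_succ_lt (fun _ _ h => Nat.succ_lt_succ (m.ha h)) (fun i => by have := m.han i; omega)
    (fun _ => Nat.succ_pos _) hn hj

theorem eB_succ_lt (hn : 0 < n) {j : ℕ} (hj : j ≤ m.l) : eB m (j + 1) < eB m j :=
  extendSeq_succ_lt m.hb (fun i => m.hbn i) (fun i => (Nat.zero_le _).trans_lt (m.hab i)) hn hj

theorem eA_le_eB (j : ℕ) : eA m j ≤ eB m j := extendSeq_le_extendSeq m.hab j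

def runs : List (ℕ × ℕ) :=
  (range (m.l + 1)).reverse.map fun i => (eB m i - eB m (i + 1), eA m i - eA m (i + 1))

theorem toPath_eq_staircase : toPath m = staircase (runs m) := by
  rw [runs, staircase, flatMap_map]
  rfl

theorem length_runs : (runs m).length = m.l + 1 := by simp [runs]

theorem sum_take_map_fst_runs (k : ℕ) :
    (((runs m).map Prod.fst).take k).sum = eB m (m.l + 1 - k) := by
  rw [runs, map_map]
  exact (sum_take_map_reverse_range_tsub (antitone_eB m) _ k).trans
    (by rw [eB_of_lt m (lt_add_one _), Nat.sub_zero])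

theorem sum_take_map_snd_runs (k : ℕ) :
    (((runs m).map Prod.snd).take k).sum = eA m (m.l + 1 - k) := by
  rw [runs, map_map]
  exact (sum_take_map_reverse_range_tsub (antitone_eA m) _ k).trans
    (by rw [eA_of_lt m (lt_add_one _), Nat.sub_zero])

theorem sum_map_fst_runs : ((runs m).map Prod.fst).sum = n := by
  have := sum_take_map_fst_runs m (m.l + 1)
  rwa [take_of_length_le (by simp [length_runs]), Nat.sub_self, eB_zero] at this

theorem sum_map_snd_runs : ((runs m).map Prod.snd).sum = n := by
  have := sum_take_map_snd_runs m (m.l + 1)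
  rwa [take_of_length_le (by simp [length_runs]), Nat.sub_self, eA_zero] at this

theorem eA_eq_sum_take {j : ℕ} (hj : j ≤ m.l + 1) :
    eA m j = (((runs m).map Prod.snd).take (m.l + 1 - j)).sum := by
  rw [sum_take_map_snd_runs, Nat.sub_sub_self hj]

theorem eB_eq_sum_take {j : ℕ} (hj : j ≤ m.l + 1) :
    eB m j = (((runs m).map Prod.fst).take (m.l + 1 - j)).sum := by
  rw [sum_take_map_fst_runs, Nat.sub_sub_self hj]

theorem pos_runs (hn : 0 < n) : ∀ q ∈ runs m, 0 < q.1 ∧ 0 < q.2 := by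
  simp only [runs, mem_map, mem_reverse, mem_range]
  rintro _ ⟨i, hi, rfl⟩
  exact ⟨Nat.sub_pos_of_lt (eB_succ_lt m hn (by omega)),
    Nat.sub_pos_of_lt (eA_succ_lt m hn (by omega))⟩

theorem isDyck_toPath : IsDyck n (toPath m) := by
  rw [toPath_eq_staircase]
  refine ⟨?_, by rw [count_true_staircase, sum_map_fst_runs], ?_⟩
  · rw [← count_true_add_count_false, count_true_staircase, count_false_staircase,
      sum_map_fst_runs, sum_map_snd_runs, two_mul]
  · rw [forall_count_take_staircase_iff]
    intro k
    rw [sum_take_map_fst_runs, sum_take_map_snd_runs]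
    exact eA_le_eB m _

end ModBalanced

theorem ModBalanced.eq_of_eA_eB {n : ℕ} {m₁ m₂ : ModBalanced n} (hl : m₁.l = m₂.l)
    (hA : ∀ j ≤ m₁.l, eA m₁ j = eA m₂ j) (hB : ∀ j ≤ m₁.l, eB m₁ j = eB m₂ j) : m₁ = m₂ := by
  rcases m₁ with ⟨l, a, b⟩
  rcases m₂ with ⟨l', a', b'⟩
  obtain rfl : l = l' := hl
  obtain rfl : a = a' := funext fun i => by simpa using hA (i + 1) i.2
  obtain rfl : b = b' := funext fun i => by simpa using hB (i + 1) i.2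
  rfl

instance : Subsingleton (ModBalanced 0) where
  allEq m₁ m₂ := by
    have hl (m : ModBalanced 0) : m.l = 0 :=
      Nat.eq_zero_of_not_pos fun h => by have := m.hbn ⟨0, h⟩; omega
    refine ModBalanced.eq_of_eA_eB (by rw [hl, hl]) (fun j hj => ?_) (fun j hj => ?_) <;>
      simp [show j = 0 by simpa [hl] using hj]

theorem runs_injective {n : ℕ} : Function.Injective (runs (n := n)) := by
  intro m₁ m₂ h
  have hl : m₁.l = m₂.l := by simpa [length_runs] using congrArg length h
  refine ModBalanced.eq_of_eA_eB hl (fun j hj => ?_) (fun j hj => ?_)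
  · rw [eA_eq_sum_take m₁ (by omega), eA_eq_sum_take m₂ (by omega), h, hl]
  · rw [eB_eq_sum_take m₁ (by omega), eB_eq_sum_take m₂ (by omega), h, hl]

theorem toPath_injective {n : ℕ} : Function.Injective (toPath (n := n)) := by
  intro m₁ m₂ h
  rcases n.eq_zero_or_pos with rfl | hn
  · exact Subsingleton.elim m₁ m₂
  · rw [toPath_eq_staircase, toPath_eq_staircase] at h
    exact runs_injective (staircase_injOn (pos_runs m₁ hn) (pos_runs m₂ hn) h)

theorem exists_eA_eB_eq {n l : ℕ} {A B : ℕ → ℕ} (hA : StrictMonoOn A (Set.Iic (l + 1)))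
    (hB : StrictMonoOn B (Set.Iic (l + 1))) (hA0 : A 0 = 0) (hB0 : B 0 = 0)
    (hAn : A (l + 1) = n) (hBn : B (l + 1) = n) (hAB : ∀ k, A k ≤ B k) :
    ∃ m : ModBalanced n, m.l = l ∧ ∀ j, eA m j = A (l + 1 - j) ∧ eB m j = B (l + 1 - j) := by
  have hA' {k k' : ℕ} (h : k < k') (h' : k' ≤ l + 1) : A k < A k' :=
    hA (Set.mem_Iic.2 (by omega)) (Set.mem_Iic.2 h') h
  have hB' {k k' : ℕ} (h : k < k') (h' : k' ≤ l + 1) : B k < B k' :=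
    hB (Set.mem_Iic.2 (by omega)) (Set.mem_Iic.2 h') h
  have hApos (i : Fin l) : 0 < A (l - i) := hA0 ▸ hA' (by omega) (by omega)
  refine ⟨⟨l, fun i => A (l - i) - 1, fun i => B (l - i), fun i j hij => ?_,
    fun i j hij => hB' (by omega) (by omega), fun i => ?_, fun i => ?_, fun i => ?_⟩,
    rfl, fun j => ⟨?_, extendSeq_sub_eq hB0 hBn j⟩⟩
  · show A (l - j) - 1 < A (l - i) - 1
    have := hA' (show l - j < l - i by omega) (by omega)
    have := hApos j
    omega
  · have := hAB (l - i)
    have := hApos i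
    omega
  · have := hB' (show l - i < l + 1 by omega) le_rfl
    omega
  · have := hA' (show l - i < l + 1 by omega) le_rfl
    have := hApos i
    omega
  · rw [eA_eq_extendSeq, ← extendSeq_sub_eq hA0 hAn j]
    congr 1
    funext i
    exact Nat.sub_add_cancel (hApos i)

theorem exists_runs_eq {n : ℕ} {L : List (ℕ × ℕ)} (hL : ∀ q ∈ L, 0 < q.1 ∧ 0 < q.2)
    (hne : L ≠ []) (hfst : (L.map Prod.fst).sum = n) (hsnd : (L.map Prod.snd).sum = n)
    (hle : ∀ k, ((L.map Prod.snd).take k).sum ≤ ((L.map Prod.fst).take k).sum) :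
    ∃ m : ModBalanced n, runs m = L := by
  obtain ⟨l, hl⟩ : ∃ l, L.length = l + 1 := Nat.exists_eq_add_one.2 (length_pos_iff.2 hne)
  obtain ⟨m, hml, hm⟩ := exists_eA_eB_eq (n := n) (l := l)
    (by simpa [hl] using strictMonoOn_sum_take (forall_mem_map.2 fun q hq => (hL q hq).2))
    (by simpa [hl] using strictMonoOn_sum_take (forall_mem_map.2 fun q hq => (hL q hq).1))
    (by simp) (by simp) (by rwa [← hl, ← length_map Prod.snd, take_length])
    (by rwa [← hl, ← length_map Prod.fst, take_length]) hle
  refine ⟨m, eq_of_map_fst_eq_of_map_snd_eq ?_ ?_⟩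
  · refine eq_of_sum_take_eq (by simp [length_runs, hml, hl]) fun k hk => ?_
    simp only [length_map, length_runs, hml] at hk
    rw [sum_take_map_fst_runs, (hm _).2, hml, Nat.sub_sub_self hk]
  · refine eq_of_sum_take_eq (by simp [length_runs, hml, hl]) fun k hk => ?_
    simp only [length_map, length_runs, hml] at hk
    rw [sum_take_map_snd_runs, (hm _).1, hml, Nat.sub_sub_self hk]

theorem IsDyck.count_false {n : ℕ} {p : List Bool} (hp : IsDyck n p) : p.count false = n := by
  have := count_true_add_count_false p
  rw [hp.1, hp.2.1] at this
  omega

theorem IsDyck.exists_eq_cons_append {n : ℕ} {p : List Bool} (hp : IsDyck n p) (hn : 0 < n) :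
    ∃ w, p = true :: (w ++ [false]) := by
  rcases eq_nil_or_concat' p with rfl | ⟨r, y, rfl⟩
  · have := hp.1
    rw [length_nil] at this
    omega
  obtain rfl : y = false := by
    by_contra hy
    obtain rfl : y = true := by simpa using hy
    have hr := hp.2.2 r.length
    have h₁ := hp.2.1
    have h₂ := hp.count_false
    rw [take_left] at hr
    rw [count_append] at h₁ h₂
    change r.count true + 1 = n at h₁
    change r.count false + 0 = n at h₂
    omega
  rcases r with _ | ⟨_ | _, w⟩
  · simpa using hp.2.2 1
  · simpa using hp.2.2 1
  · exact ⟨w, rfl⟩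

theorem exists_toPath_eq {n : ℕ} {p : List Bool} (hp : IsDyck n p) :
    ∃ m : ModBalanced n, toPath m = p := by
  rcases n.eq_zero_or_pos with rfl | hn
  · let m : ModBalanced 0 := ⟨0, nofun, nofun, nofun, nofun, nofun, nofun, nofun⟩
    exact ⟨m, by rw [eq_nil_of_length_eq_zero (isDyck_toPath m).1, eq_nil_of_length_eq_zero hp.1]⟩
  obtain ⟨w, rfl⟩ := hp.exists_eq_cons_append hn
  obtain ⟨L, hL, hLw⟩ := exists_staircase_eq w one_pos 0
  simp only [replicate_one, replicate_zero, append_nil, singleton_append] at hLw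
  rw [← hLw] at hp
  obtain ⟨m, hm⟩ := exists_runs_eq hL (by rintro rfl; simp [staircase_nil] at hLw)
    (by rw [← count_true_staircase, hp.2.1]) (by rw [← count_false_staircase, hp.count_false])
    ((forall_count_take_staircase_iff L).1 hp.2.2)
  exact ⟨m, by rw [toPath_eq_staircase, hm, hLw]⟩

/-- The map sending a modified balanced partition of size `n` (in Frobenius notation) to
the above lattice path is a bijection onto the set of Dyck paths of length `2n`. -/
theorem stmt_6 (n : ℕ) :
    Set.BijOn (toPath (n := n)) Set.univ {p : List Bool | IsDyck n p} :=
  ⟨fun m _ => isDyck_toPath m, toPath_injective.injOn, fun _ hp =>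
    let ⟨m, hm⟩ := exists_toPath_eq hp
    ⟨m, Set.mem_univ m, hm⟩⟩
end

section
/- If T is a totally symmetric plane partition inside an (n−1,n−1,n−1)-box with diagonal partition diag(T) having Frobenius notation (a_1,…,a_l | b_1,…,b_l), then the partition π(T) with Frobenius notation (a_1,…,a_l | b_1+1,…,b_l+1) is a modified balanced partition of size n. -/
/-- A plane partition inside an `(m,m,m)`-box, as a down-closed subset of `{1,…,m}^3`. -/
def DownClosed (m : ℕ) (T : Set (Fin m × Fin m × Fin m)) : Prop :=
  ∀ i j k i' j' k', (i, j, k) ∈ T → i' ≤ i → j' ≤ j → k' ≤ k → (i', j', k') ∈ T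

/-- Total symmetry: invariance under all permutations of the three coordinates. -/
def TotSym (m : ℕ) (T : Set (Fin m × Fin m × Fin m)) : Prop :=
  ∀ i j k, (i, j, k) ∈ T →
    (j, i, k) ∈ T ∧ (i, k, j) ∈ T ∧ (j, k, i) ∈ T ∧ (k, i, j) ∈ T ∧ (k, j, i) ∈ T

/-- The stack height `T_{i,i}` on the diagonal. -/
noncomputable def diagHt (m : ℕ) (T : Set (Fin m × Fin m × Fin m)) (i : Fin m) : ℕ :=
  Set.ncard {k : Fin m | (i, i, k) ∈ T}

/-- The `j`-th part (`1`-based) of `diag(T) = (T_{1,1},…,T_{m,m})'`. -/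
noncomputable def diagPart (m : ℕ) (T : Set (Fin m × Fin m × Fin m)) (j : ℕ) : ℕ :=
  Set.ncard {i : Fin m | j ≤ diagHt m T i}

/-- The `j`-th part (`1`-based) of the conjugate of `diag(T)`. -/
noncomputable def diagConj (m : ℕ) (T : Set (Fin m × Fin m × Fin m)) (j : ℕ) : ℕ :=
  Set.ncard {i : Fin m | j ≤ diagPart m T ((i : ℕ) + 1)}

/-!
Write `λ = diag(T)`, so that `λ_{j+1}` counts the `i` with `(i,i,j) ∈ T`. If `j` lies in the
Durfee square of `λ` then `(j,j,j) ∈ T`, and for every `k < λ_{j+1}` total symmetry turns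
`(k,k,j) ∈ T` into `(j,k,k) ∈ T`, hence `(j,j,k) ∈ T` by down-closedness. So `λ_{k+1} > j` for all
`k < λ_{j+1}`, that is `λ_{j+1} ≤ λ'_{j+1}`, which is `a_i ≤ b_i`. The bounds by `n` hold because
`λ` and `λ'` fit in an `(n-1) × (n-1)` square.
-/

lemma Fin.le_ncard_of_forall_lt_mem {m r : ℕ} (hr : r ≤ m) {S : Set (Fin m)}
    (h : ∀ x : Fin m, (x : ℕ) < r → x ∈ S) : r ≤ S.ncard := by
  have hsub : Set.range (Fin.castLE hr) ⊆ S := by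
    rintro _ ⟨y, rfl⟩
    exact h _ y.isLt
  simpa [← Set.image_univ, Set.ncard_image_of_injective _ (Fin.castLE_injective hr)] using
    Set.ncard_le_ncard hsub

lemma IsLowerSet.mem_iff_lt_ncard {m : ℕ} {S : Set (Fin m)} (hS : IsLowerSet S) (x : Fin m) :
    x ∈ S ↔ (x : ℕ) < S.ncard := by
  constructor
  · intro hx
    have h := Set.ncard_le_ncard (hS.Iic_subset hx)
    rw [← Finset.coe_Iic, Set.ncard_coe_finset, Fin.card_Iic] at h
    omega
  · intro hx
    by_contra hxS
    have hsub : S ⊆ Set.Iio x := fun y hy => lt_of_not_ge fun hxy => hxS (hS hxy hy)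
    have h := Set.ncard_le_ncard hsub
    rw [← Finset.coe_Iio, Set.ncard_coe_finset, Fin.card_Iio] at h
    omega

section TSPP

variable {m : ℕ} {T : Set (Fin m × Fin m × Fin m)}

lemma diagPart_le (j : ℕ) : diagPart m T j ≤ m := by
  simpa [diagPart] using Set.ncard_le_card {i : Fin m | j ≤ diagHt m T i}

lemma diagConj_le (j : ℕ) : diagConj m T j ≤ m := by
  simpa [diagConj] using Set.ncard_le_card {i : Fin m | j ≤ diagPart m T ((i : ℕ) + 1)}

lemma DownClosed.lt_diagHt_iff (hdc : DownClosed m T) (i k : Fin m) :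
    (k : ℕ) < diagHt m T i ↔ (i, i, k) ∈ T :=
  (IsLowerSet.mem_iff_lt_ncard (S := {k | (i, i, k) ∈ T})
    (fun _ _ hle hx => hdc _ _ _ _ _ _ hx le_rfl le_rfl hle) k).symm

lemma DownClosed.mem_iff_lt_diagPart (hdc : DownClosed m T) (i k : Fin m) :
    (i, i, k) ∈ T ↔ (i : ℕ) < diagPart m T ((k : ℕ) + 1) := by
  have hset : {i : Fin m | (k : ℕ) + 1 ≤ diagHt m T i} = {i | (i, i, k) ∈ T} := by
    ext i
    exact hdc.lt_diagHt_iff i k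
  rw [diagPart, hset]
  exact IsLowerSet.mem_iff_lt_ncard (fun _ _ hle hx => hdc _ _ _ _ _ _ hx hle hle le_rfl) i

lemma DownClosed.le_diagPart_of_mem (hdc : DownClosed m T) {j k : Fin m} (h : (j, j, k) ∈ T) :
    (j : ℕ) + 1 ≤ diagPart m T ((k : ℕ) + 1) :=
  Fin.le_ncard_of_forall_lt_mem j.isLt fun i hi =>
    (hdc.lt_diagHt_iff i k).2 (hdc _ _ _ _ _ _ h (Fin.le_def.2 (by omega))
      (Fin.le_def.2 (by omega)) le_rfl)

lemma TotSym.mem_of_mem_diag (hsym : TotSym m T) (hdc : DownClosed m T) {j k : Fin m}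
    (hjjj : (j, j, j) ∈ T) (hkkj : (k, k, j) ∈ T) : (j, j, k) ∈ T := by
  rcases le_total k j with hkj | hjk
  · exact hdc _ _ _ _ _ _ hjjj le_rfl le_rfl hkj
  · exact hdc _ _ _ _ _ _ (hsym k k j hkkj).2.2.2.1 le_rfl hjk le_rfl

theorem diagPart_le_diagConj (hdc : DownClosed m T) (hsym : TotSym m T) {j : ℕ}
    (hj : j + 1 ≤ diagPart m T (j + 1)) : diagPart m T (j + 1) ≤ diagConj m T (j + 1) := by
  have hjm : j < m := by have := diagPart_le (T := T) (j + 1); omega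
  set J : Fin m := ⟨j, hjm⟩
  have hJJJ : (J, J, J) ∈ T := (hdc.mem_iff_lt_diagPart J J).2 hj
  refine Fin.le_ncard_of_forall_lt_mem (diagPart_le _) fun k hk => ?_
  exact hdc.le_diagPart_of_mem (hsym.mem_of_mem_diag hdc hJJJ ((hdc.mem_iff_lt_diagPart k J).2 hk))

end TSPP

theorem stmt_8_general (n : ℕ) (T : Set (Fin (n - 1) × Fin (n - 1) × Fin (n - 1)))
    (hdc : DownClosed (n - 1) T) (hsym : TotSym (n - 1) T)
    (l : ℕ) (a b : Fin l → ℕ)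
    (hFa : ∀ i : Fin l, diagPart (n - 1) T ((i : ℕ) + 1) = a i + ((i : ℕ) + 1))
    (hFb : ∀ i : Fin l, diagConj (n - 1) T ((i : ℕ) + 1) = b i + ((i : ℕ) + 1)) :
    (∀ i, a i < b i + 1) ∧ (∀ i, (a i + 1) + 1 ≤ n) ∧ (∀ i, (b i + 1) + 1 ≤ n) := by
  refine ⟨fun i => ?_, fun i => ?_, fun i => ?_⟩
  · have h := diagPart_le_diagConj hdc hsym (j := i) (by rw [hFa i]; omega)
    rw [hFa i, hFb i] at h
    omega
  · have h := diagPart_le (T := T) ((i : ℕ) + 1)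
    rw [hFa i] at h
    omega
  · have h := diagConj_le (T := T) ((i : ℕ) + 1)
    rw [hFb i] at h
    omega

/-- If `T` is a TSPP inside an `(n−1,n−1,n−1)`-box whose diagonal partition `diag(T)` has
Frobenius notation `(a_1,…,a_l | b_1,…,b_l)` (encoded via `diag(T)_i = a_i + i`,
`diag(T)'_i = b_i + i` for `i ≤ l`, and `diag(T)_{l+1} ≤ l`), then
`π(T) = (a_1,…,a_l | b_1+1,…,b_l+1)` is a modified balanced partition of size `n`:
its Frobenius data satisfy `a_i < b_i + 1`, its largest part `a_1 + 1` is at most `n − 1`,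
and it has at most `n` parts (`(b_1 + 1) + 1 ≤ n`). -/
theorem stmt_8 (n : ℕ) (hn : 1 ≤ n) (T : Set (Fin (n - 1) × Fin (n - 1) × Fin (n - 1)))
    (hdc : DownClosed (n - 1) T) (hsym : TotSym (n - 1) T)
    (l : ℕ) (a b : Fin l → ℕ)
    (hFa : ∀ i : Fin l, diagPart (n - 1) T ((i : ℕ) + 1) = a i + ((i : ℕ) + 1))
    (hFb : ∀ i : Fin l, diagConj (n - 1) T ((i : ℕ) + 1) = b i + ((i : ℕ) + 1))
    (hDur : diagPart (n - 1) T (l + 1) ≤ l) :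
    (∀ i, a i < b i + 1) ∧ (∀ i, (a i + 1) + 1 ≤ n) ∧ (∀ i, (b i + 1) + 1 ≤ n) :=
  stmt_8_general n T hdc hsym l a b hFa hFb
end

section
/- The symmetric polynomial 𝒜_n(u,v;x_1,…,x_n) equals det_{1≤i,j≤n}( x_i^{n−j} p_j(x_i) ) / ∏_{1≤i<j≤n}(x_i − x_j), where p_j(x) = ∑_{k=0}^{j−1} x^k (−1+u+v−ux)^k v^{j−1−k}. -/
/-!
With `w_b = -1 + u + v - u x_b` the factor `v + (1-u-v) x_i + u x_i x_j` is `v - x_i w_j`. As the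
two Vandermonde products differ by the sign `(-1)^(n choose 2)`, the claim reduces to the identity
`Asym[∏ x_i^{i-1} ∏_{i<j} (v - x_i w_j)] = (-1)^(n choose 2) det(x_i^{n-j} h_{j-1}(x_i w_i, v))`
over any commutative ring, where `Asym` permutes `x` and `w` together and
`h_m(a, v) = ∑_{k ≤ m} a^k v^{m-k}`. Both sides satisfy the same recursion in `n`. On the left,
split the permutations by the image `p` of the first index: the factors involving `x_p` come out
as `∏_{b ≠ p} x_b (v - x_p w_b)`. On the right, add to the last column the other columns with
coefficients `(-1)^{n-j} e_{n-j}(w)`; synthetic division of `∏_b (X - x_i w_b)` by `X - x_i w_i`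
turns the `i`-th entry into `∏_{b ≠ i} (v - x_i w_b)`, and the Laplace expansion along that column
produces the same factors.
-/

/-- The symmetric function
`𝒜_n(u,v;x) = Asym[ ∏ x_i^{i−1} ∏_{i<j} (v + (1−u−v)x_i + u x_i x_j) ] / ∏_{i<j}(x_j − x_i)`,
where `Asym f(x) = ∑_{σ∈S_n} sgn(σ) f(x_{σ(1)},…,x_{σ(n)})`. -/
noncomputable def Apoly (F : Type*) [Field F] (n : ℕ) (u v : F) (x : Fin n → F) : F :=
  (∑ σ : Equiv.Perm (Fin n), (Equiv.Perm.sign σ : ℤ) •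
      ((∏ i : Fin n, x (σ i) ^ (i : ℕ)) *
        ∏ p ∈ Finset.univ.filter (fun p : Fin n × Fin n => p.1 < p.2),
          (v + (1 - u - v) * x (σ p.1) + u * x (σ p.1) * x (σ p.2)))) /
    ∏ p ∈ Finset.univ.filter (fun p : Fin n × Fin n => p.1 < p.2), (x p.2 - x p.1)

/-- The Schur polynomial `s_λ(x) = det(x_i^{λ_j + n − j}) / ∏_{i<j}(x_i − x_j)`
(indices `1`-based; below `λ` is given `0`-based as `lam : Fin n → ℕ`). -/
noncomputable def schur (F : Type*) [Field F] (n : ℕ) (lam : Fin n → ℕ)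
    (x : Fin n → F) : F :=
  Matrix.det (Matrix.of fun i j : Fin n => x i ^ (lam j + (n - 1 - (j : ℕ)))) /
    ∏ p ∈ Finset.univ.filter (fun p : Fin n × Fin n => p.1 < p.2), (x p.1 - x p.2)

open Finset Equiv Polynomial

theorem prod_filter_fst_lt_snd_eq_prod_Ioi {ι M : Type*} [Fintype ι] [LinearOrder ι]
    [LocallyFiniteOrderTop ι] [CommMonoid M] (f : ι → ι → M) :
    ∏ p ∈ univ.filter (fun p : ι × ι => p.1 < p.2), f p.1 p.2 = ∏ i, ∏ j ∈ Ioi i, f i j := by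
  rw [prod_filter, Fintype.prod_prod_type]
  refine prod_congr rfl fun i _ => ?_
  rw [← prod_filter, filter_lt_eq_Ioi]

theorem prod_filter_fst_lt_snd_sub_swap {ι R : Type*} [Fintype ι] [LinearOrder ι] [CommRing R]
    (f : ι → R) :
    ∏ p ∈ univ.filter (fun p : ι × ι => p.1 < p.2), (f p.2 - f p.1) =
      (-1) ^ (Fintype.card ι).choose 2 *
        ∏ p ∈ univ.filter (fun p : ι × ι => p.1 < p.2), (f p.1 - f p.2) := by
  rw [← Fintype.card_product_filter_lt, ← prod_neg]
  simp only [neg_sub]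

namespace Fin

def insertPerm {n : ℕ} (p : Fin (n + 1)) (e : Perm (Fin n)) : Perm (Fin (n + 1)) :=
  p.cycleRange.symm * Perm.decomposeFin.symm (0, e)

theorem insertPerm_zero {n : ℕ} (p : Fin (n + 1)) (e : Perm (Fin n)) : insertPerm p e 0 = p := by
  simp [insertPerm]

theorem comp_insertPerm {α : Type*} {n : ℕ} (x : Fin (n + 1) → α) (p : Fin (n + 1))
    (e : Perm (Fin n)) : x ∘ insertPerm p e = Fin.cons (x p) (p.removeNth x ∘ e) := by
  ext i
  cases i using Fin.cases <;> simp [insertPerm, Fin.removeNth]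

theorem sign_insertPerm {n : ℕ} (p : Fin (n + 1)) (e : Perm (Fin n)) :
    Perm.sign (insertPerm p e) = (-1) ^ (p : ℕ) * Perm.sign e := by
  simp [insertPerm]

theorem bijective_insertPerm {n : ℕ} :
    Function.Bijective fun pe : Fin (n + 1) × Perm (Fin n) => insertPerm pe.1 pe.2 := by
  refine (Fintype.bijective_iff_injective_and_card _).mpr
    ⟨?_, by simp [Fintype.card_perm, Nat.factorial_succ]⟩
  rintro ⟨p, e⟩ ⟨q, f⟩ h
  obtain rfl : p = q := by simpa [insertPerm_zero] using congr($h 0)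
  simpa using Perm.decomposeFin.symm.injective (mul_left_cancel h)

theorem sum_perm_eq_sum_insertPerm {M : Type*} [AddCommMonoid M] {n : ℕ}
    (G : Perm (Fin (n + 1)) → M) : ∑ σ, G σ = ∑ p, ∑ e, G (insertPerm p e) := by
  rw [← Fintype.sum_prod_type']
  exact (Fintype.sum_bijective _ bijective_insertPerm _ _ fun _ => rfl).symm

end Fin

section CommRing

variable {R : Type*} [CommRing R]

theorem Polynomial.eval_eq_sum_coeff_succ_mul_geom_sum₂ {p q : R[X]} {a : R} {N : ℕ}
    (hN : p.natDegree ≤ N) (hpq : p = (X - C a) * q) (t : R) :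
    q.eval t = ∑ k ∈ range N, p.coeff (k + 1) * ∑ i ∈ range (k + 1), a ^ i * t ^ (k - i) := by
  set Q : R[X] := ∑ k ∈ range N, C (p.coeff (k + 1)) * ∑ i ∈ range (k + 1), C a ^ i * X ^ (k - i)
  have hroot : ∑ k ∈ range N, C (p.coeff (k + 1)) * C a ^ (k + 1) + C (p.coeff 0) = 0 := by
    have h : C (p.eval a) = 0 := by simp [hpq]
    simpa [eval_eq_sum_range' (Nat.lt_succ_of_le hN), sum_range_succ', map_sum] using h
  have hp : p = ∑ k ∈ range N, C (p.coeff (k + 1)) * X ^ (k + 1) + C (p.coeff 0) := by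
    conv_lhs => rw [as_sum_range_C_mul_X_pow' p (Nat.lt_succ_of_le hN)]
    simp [sum_range_succ']
  have hgeom (k : ℕ) : (X - C a) * ∑ i ∈ range (k + 1), C a ^ i * X ^ (k - i) =
      X ^ (k + 1) - C a ^ (k + 1) := by
    have h := geom_sum₂_mul (C a) X (k + 1)
    simp only [Nat.add_sub_cancel] at h
    linear_combination -h
  have hQ : (X - C a) * Q = (X - C a) * q := by
    rw [← hpq, mul_sum]
    simp only [mul_left_comm (X - C a) (C _), hgeom, mul_sub, sum_sub_distrib]
    linear_combination -hp - hroot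
  rw [← (monic_X_sub_C a).isRegular.left hQ]
  simp [Q, eval_finsetSum]

theorem Polynomial.coeff_prod_X_sub_C_mul {ι : Type*} [Fintype ι] (x : R) (w : ι → R) {k : ℕ}
    (hk : k ≤ Fintype.card ι) :
    (∏ b, (X - C (x * w b))).coeff k =
      (-1) ^ (Fintype.card ι - k) * x ^ (Fintype.card ι - k) *
        (univ.val.map w).esymm (Fintype.card ι - k) := by
  have h := Multiset.prod_X_sub_C_coeff (univ.val.map fun b => x * w b) (k := k) (by simpa)
  rw [Multiset.map_map, Function.comp_def, Multiset.card_map, card_val, card_univ] at h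
  rw [prod_eq_multiset_prod, h, mul_assoc, ← smul_eq_mul (a := x ^ _), Multiset.pow_smul_esymm,
    Multiset.map_map]
  rfl

def geomMatrix {n : ℕ} (v : R) (x w : Fin n → R) : Matrix (Fin n) (Fin n) R :=
  Matrix.of fun i j =>
    x i ^ (n - 1 - (j : ℕ)) * ∑ k ∈ range ((j : ℕ) + 1), (x i * w i) ^ k * v ^ ((j : ℕ) - k)

theorem sum_esymm_mul_geomMatrix {n : ℕ} (v : R) (x w : Fin (n + 1) → R) (i : Fin (n + 1)) :
    ∑ j : Fin (n + 1), (-1) ^ (n - (j : ℕ)) * (univ.val.map w).esymm (n - j) *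
        geomMatrix v x w i j =
      ∏ b, (v - x i * w (i.succAbove b)) := by
  have hfactor : ∏ b, (X - C (x i * w b)) =
      (X - C (x i * w i)) * ∏ b, (X - C (x i * w (i.succAbove b))) :=
    Fin.prod_univ_succAbove _ i
  have hdeg : (∏ b, (X - C (x i * w b))).natDegree ≤ n + 1 :=
    (natDegree_prod_le _ _).trans <| by
      simpa using sum_le_card_nsmul univ _ 1 fun b _ => natDegree_X_sub_C_le (x i * w b)
  have h := eval_eq_sum_coeff_succ_mul_geom_sum₂ hdeg hfactor v
  simp only [eval_prod, eval_sub, eval_X, eval_C] at h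
  simp only [h, geomMatrix, Matrix.of_apply]
  rw [Fin.sum_univ_eq_sum_range (fun j => (-1) ^ (n - j) * (univ.val.map w).esymm (n - j) *
    (x i ^ (n + 1 - 1 - j) * ∑ k ∈ range (j + 1), (x i * w i) ^ k * v ^ (j - k)))]
  refine sum_congr rfl fun j hj => ?_
  rw [coeff_prod_X_sub_C_mul _ _ (by simp at hj ⊢; omega)]
  simp only [Fintype.card_fin, Nat.add_sub_add_right, Nat.add_sub_cancel]
  ring

theorem geomMatrix_submatrix_succAbove_castSucc {n : ℕ} (v : R) (x w : Fin (n + 1) → R)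
    (p : Fin (n + 1)) :
    (geomMatrix v x w).submatrix p.succAbove Fin.castSucc =
      Matrix.of fun a b => p.removeNth x a * geomMatrix v (p.removeNth x) (p.removeNth w) a b := by
  ext a b
  have hexp : n + 1 - 1 - (b : ℕ) = n - 1 - b + 1 := by omega
  simp only [geomMatrix, Matrix.submatrix_apply, Matrix.of_apply, Fin.val_castSucc, hexp,
    pow_succ, Fin.removeNth]
  ring

theorem det_geomMatrix_succ {n : ℕ} (v : R) (x w : Fin (n + 1) → R) :
    (geomMatrix v x w).det = ∑ p : Fin (n + 1), (-1) ^ (p + n : ℕ) *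
      ((∏ b, (v - x p * p.removeNth w b)) * ((∏ b, p.removeNth x b) *
        (geomMatrix v (p.removeNth x) (p.removeNth w)).det)) := by
  have hcol := Matrix.det_updateCol_sum (geomMatrix v x w) (Fin.last n)
    fun j => (-1) ^ (n - (j : ℕ)) * (univ.val.map w).esymm (n - j)
  have hlast : (-1) ^ (n - (Fin.last n : ℕ)) * (univ.val.map w).esymm (n - Fin.last n) = 1 := by
    simp [Multiset.esymm, Multiset.powersetCard_zero_left]
  simp only [smul_eq_mul, sum_esymm_mul_geomMatrix, hlast, one_mul] at hcol
  rw [← hcol, Matrix.det_succ_column _ (Fin.last n)]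
  refine sum_congr rfl fun p _ => ?_
  rw [Matrix.updateCol_self, Matrix.submatrix_updateCol_succAbove, Fin.succAbove_last,
    geomMatrix_submatrix_succAbove_castSucc, Matrix.det_mul_column, Fin.val_last, mul_assoc]
  rfl

def asymTerm {n : ℕ} (v : R) (y z : Fin n → R) : R :=
  (∏ i, y i ^ (i : ℕ)) * ∏ i, ∏ j ∈ Ioi i, (v - y i * z j)

def asymNumerator {n : ℕ} (v : R) (x w : Fin n → R) : R :=
  ∑ σ : Perm (Fin n), (Perm.sign σ : ℤ) • asymTerm v (x ∘ σ) (w ∘ σ)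

theorem asymTerm_cons {n : ℕ} (v a c : R) (y z : Fin n → R) :
    asymTerm v (Fin.cons a y) (Fin.cons c z) =
      (∏ i, y i) * (∏ j, (v - a * z j)) * asymTerm v y z := by
  simp only [asymTerm, Fin.prod_univ_succ, Fin.prod_Ioi_zero, Fin.prod_Ioi_succ, Fin.cons_zero,
    Fin.cons_succ, Fin.val_zero, Fin.val_succ, pow_zero, pow_succ, prod_mul_distrib]
  ring

theorem asymNumerator_succ {n : ℕ} (v : R) (x w : Fin (n + 1) → R) :
    asymNumerator v x w = ∑ p : Fin (n + 1), (-1) ^ (p : ℕ) *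
      ((∏ b, (v - x p * p.removeNth w b)) * ((∏ b, p.removeNth x b) *
        asymNumerator v (p.removeNth x) (p.removeNth w))) := by
  rw [asymNumerator, Fin.sum_perm_eq_sum_insertPerm]
  refine sum_congr rfl fun p _ => ?_
  rw [asymNumerator, mul_sum, mul_sum, mul_sum]
  refine sum_congr rfl fun e _ => ?_
  have hx : ∏ i, (p.removeNth x ∘ e) i = ∏ b, p.removeNth x b := Equiv.prod_comp e _
  have hw : ∏ j, (v - x p * (p.removeNth w ∘ e) j) = ∏ b, (v - x p * p.removeNth w b) :=
    Equiv.prod_comp e fun b => v - x p * p.removeNth w b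
  rw [Fin.comp_insertPerm, Fin.comp_insertPerm, asymTerm_cons, Fin.sign_insertPerm, hx, hw]
  simp only [Units.val_mul, Units.val_pow_eq_pow_val, Units.val_neg, Units.val_one, zsmul_eq_mul]
  push_cast
  ring

theorem asymNumerator_eq_det {n : ℕ} (v : R) (x w : Fin n → R) :
    asymNumerator v x w = (-1) ^ n.choose 2 * (geomMatrix v x w).det := by
  induction n with
  | zero => simp [asymNumerator, asymTerm]
  | succ n ih =>
    rw [asymNumerator_succ, det_geomMatrix_succ, mul_sum]
    have hchoose : (n + 1).choose 2 = n + n.choose 2 := by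
      rw [Nat.choose_succ_succ', Nat.choose_one_right]
    refine sum_congr rfl fun p _ => ?_
    have hsign : (-1 : R) ^ (n + n.choose 2) * (-1) ^ ((p : ℕ) + n) =
        (-1) ^ (p : ℕ) * (-1) ^ n.choose 2 := by
      rw [← pow_add, ← pow_add, show n + n.choose 2 + (p + n) = p + n.choose 2 + 2 * n by ring,
        pow_add _ _ (2 * n), pow_mul, neg_one_sq, one_pow, mul_one]
    rw [ih, hchoose, ← mul_assoc ((-1 : R) ^ (n + n.choose 2)), hsign]
    ring

end CommRing

theorem Apoly_eq_asymNumerator_div (F : Type*) [Field F] (n : ℕ) (u v : F) (x : Fin n → F) :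
    Apoly F n u v x = asymNumerator v x (fun b => -1 + u + v - u * x b) /
      ∏ p ∈ univ.filter (fun p : Fin n × Fin n => p.1 < p.2), (x p.2 - x p.1) := by
  rw [Apoly, asymNumerator]
  congr 1
  refine sum_congr rfl fun σ _ => ?_
  rw [asymTerm, ← prod_filter_fst_lt_snd_eq_prod_Ioi]
  congr 2
  refine prod_congr rfl fun p _ => ?_
  simp only [Function.comp_apply]
  ring

theorem stmt_13_general (F : Type*) [Field F] (n : ℕ) (u v : F) (x : Fin n → F) :
    Apoly F n u v x =
      Matrix.det (Matrix.of fun i j : Fin n =>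
          x i ^ (n - 1 - (j : ℕ)) *
            ∑ k ∈ Finset.range ((j : ℕ) + 1),
              x i ^ k * (-1 + u + v - u * x i) ^ k * v ^ ((j : ℕ) - k)) /
        ∏ p ∈ Finset.univ.filter (fun p : Fin n × Fin n => p.1 < p.2), (x p.1 - x p.2) := by
  rw [Apoly_eq_asymNumerator_div, asymNumerator_eq_det, prod_filter_fst_lt_snd_sub_swap,
    Fintype.card_fin, mul_div_mul_left _ _ (pow_ne_zero _ (neg_ne_zero.mpr one_ne_zero))]
  congr 2
  ext i j
  simp only [geomMatrix, Matrix.of_apply, mul_pow]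

/-- `𝒜_n(u,v;x) = det_{1≤i,j≤n}( x_i^{n−j} p_j(x_i) ) / ∏_{1≤i<j≤n}(x_i − x_j)`, where
`p_j(x) = ∑_{k=0}^{j−1} x^k (−1+u+v−ux)^k v^{j−1−k}` (below `j : Fin n` encodes the
`1`-based column index `j+1`). -/
theorem stmt_13 (F : Type*) [Field F] (n : ℕ) (u v : F) (x : Fin n → F)
    (hx : Function.Injective x) :
    Apoly F n u v x =
      Matrix.det (Matrix.of fun i j : Fin n =>
          x i ^ (n - 1 - (j : ℕ)) *
            ∑ k ∈ Finset.range ((j : ℕ) + 1),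
              x i ^ k * (-1 + u + v - u * x i) ^ k * v ^ ((j : ℕ) - k)) /
        ∏ p ∈ Finset.univ.filter (fun p : Fin n × Fin n => p.1 < p.2), (x p.1 - x p.2) :=
  stmt_13_general F n u v x
end

section
/- Let (p_j(x))_{j=1}^n be polynomials with p_j(x) = ∑_{k≥0} a_{j,k} x^k. Then det_{1≤i,j≤n}( x_i^{n−j} p_j(x_i) ) / ∏_{1≤i<j≤n}(x_i − x_j) = ∑_λ s_λ(x_1,…,x_n) · det_{1≤i,j≤n}( a_{j, λ_i + j − i} ), where the sum is over partitions λ with at most n parts and s_λ denotes the Schur polynomial in n variables. -/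
open Finset Matrix Equiv Function Polynomial

open scoped Classical in
theorem Fin.sum_injective_eq_sum_strictMono_comp_perm {ι M : Type*} [Fintype ι] [LinearOrder ι]
    [AddCommMonoid M] {n : ℕ} (f : (Fin n → ι) → M) :
    ∑ p : Fin n → ι with Injective p, f p =
      ∑ μ : Fin n → ι with StrictMono μ, ∑ τ : Perm (Fin n), f (μ ∘ τ) := by
  rw [← sum_product']
  symm
  refine sum_bij (fun x _ => x.1 ∘ x.2) ?_ ?_ ?_ fun _ _ => rfl
  · simp only [mem_product, mem_filter_univ, mem_univ, and_true]
    exact fun x hx => hx.injective.comp x.2.injective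
  · simp only [mem_product, mem_filter_univ, mem_univ, and_true]
    rintro ⟨μ, τ⟩ hμ ⟨μ', τ'⟩ hμ' h
    have hrange : Set.range μ = Set.range μ' := by
      simpa only [EquivLike.range_comp] using congrArg Set.range h
    obtain rfl : μ = μ' := (hμ.range_inj hμ').mp hrange
    exact Prod.ext rfl (Equiv.ext fun i => hμ.injective (congrFun h i))
  · simp only [mem_product, mem_filter_univ, mem_univ, and_true]
    intro p hp
    refine ⟨(p ∘ Tuple.sort p, (Tuple.sort p)⁻¹),
      (Tuple.monotone_sort p).strictMono_of_injective (hp.comp (Tuple.sort p).injective), ?_⟩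
    ext i
    simp

theorem StrictAnti.antitone_add_val {n : ℕ} {μ : Fin n → ℕ} (hμ : StrictAnti μ) :
    Antitone fun i => μ i + i := by
  cases n with
  | zero => exact fun i => i.elim0
  | succ n =>
    refine Fin.antitone_iff_succ_le.mpr fun i => ?_
    have := hμ (Fin.castSucc_lt_succ (i := i))
    simp only [Fin.val_succ, Fin.val_castSucc]
    omega

theorem StrictAnti.add_val_mem_Ico {n N : ℕ} {μ : Fin n → Fin N} (hμ : StrictAnti μ)
    (i : Fin n) : (μ i : ℕ) + i ∈ Set.Ico (n - 1) N := by
  have hν := (Fin.val_strictMono.comp_strictAnti hμ).antitone_add_val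
  have hlast :=
    hν (Fin.le_def.mpr (by dsimp only; omega) : i ≤ ⟨n - 1, Nat.sub_lt i.pos Nat.one_pos⟩)
  have hfirst := hν (Fin.le_def.mpr (Nat.zero_le i) : (⟨0, i.pos⟩ : Fin n) ≤ i)
  simp only [Function.comp_apply] at hlast hfirst
  exact ⟨by omega, by omega⟩

open scoped Classical in
theorem Fin.sum_strictAnti_eq_sum_antitone {M : Type*} [AddCommMonoid M] {n D : ℕ}
    (f : (Fin n → ℕ) → M) :
    ∑ μ : Fin n → Fin (D + n) with StrictAnti μ, f (fun i => μ i) =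
      ∑ lam : Fin n → Fin (D + 1) with Antitone lam, f (fun i => lam i + (n - 1 - i)) := by
  have hbound {μ : Fin n → Fin (D + n)} (hμ : μ ∈ univ.filter StrictAnti) (i : Fin n) :=
    Set.mem_Ico.mp (((mem_filter_univ μ).mp hμ).add_val_mem_Ico i)
  refine sum_bij' (fun μ hμ i => ⟨μ i + i - (n - 1), by have := hbound hμ i; omega⟩)
    (fun lam _ i => ⟨lam i + (n - 1 - i), by omega⟩) ?_ ?_ ?_ ?_ ?_
  · intro μ hμ
    simp only [mem_filter_univ]
    intro i j hij
    have := (Fin.val_strictMono.comp_strictAnti ((mem_filter_univ μ).mp hμ)).antitone_add_val hij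
    simp only [Fin.mk_le_mk, Function.comp_apply] at this ⊢
    omega
  · intro lam hlam
    simp only [mem_filter_univ] at hlam ⊢
    intro i j hij
    have := hlam hij.le
    simp only [Fin.lt_def] at this hij ⊢
    omega
  · intro μ hμ
    ext i
    have := hbound hμ i
    simp only
    omega
  · intro lam _
    ext i
    simp only
    omega
  · intro μ hμ
    congr 1
    ext i
    have := hbound hμ i
    simp only
    omega

section Determinant

variable {R : Type*} [CommRing R] {n : ℕ}

theorem Matrix.det_mul_eq_sum_det_submatrix_mul_prod {ι : Type*} [Fintype ι]
    (A : Matrix (Fin n) ι R) (B : Matrix ι (Fin n) R) :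
    det (A * B) = ∑ p : Fin n → ι, det (A.submatrix id p) * ∏ i, B (p i) i := by
  simp only [det_apply', mul_apply, prod_univ_sum, mul_sum, sum_mul, Fintype.piFinset_univ,
    submatrix_apply, id, prod_mul_distrib, mul_assoc]
  rw [sum_comm]

variable {ι : Type*} [Fintype ι] [LinearOrder ι]

open scoped Classical in
theorem Matrix.det_mul_eq_sum_strictMono (A : Matrix (Fin n) ι R) (B : Matrix ι (Fin n) R) :
    det (A * B) = ∑ μ : Fin n → ι with StrictMono μ,
      det (A.submatrix id μ) * det (B.submatrix μ id) := by
  calc det (A * B)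
      = ∑ p : Fin n → ι with Injective p, det (A.submatrix id p) * ∏ i, B (p i) i := by
        rw [det_mul_eq_sum_det_submatrix_mul_prod, sum_filter_of_ne]
        intro p _ hp
        by_contra hinj
        obtain ⟨i, j, hij, hne⟩ := Function.not_injective_iff.mp hinj
        exact hp (by rw [det_zero_of_column_eq hne fun k => by simp [hij], zero_mul])
    _ = _ := by
        rw [Fin.sum_injective_eq_sum_strictMono_comp_perm]
        refine sum_congr rfl fun μ _ => ?_
        simp only [det_apply' (B.submatrix μ id), mul_sum]
        refine sum_congr rfl fun τ _ => ?_
        rw [show A.submatrix id (μ ∘ τ) = (A.submatrix id μ).submatrix id τ from rfl,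
          det_permute']
        simp only [submatrix_apply, id, Function.comp_apply]
        ring

open scoped Classical in
theorem Matrix.det_mul_eq_sum_strictAnti (A : Matrix (Fin n) ι R) (B : Matrix ι (Fin n) R) :
    det (A * B) = ∑ μ : Fin n → ι with StrictAnti μ,
      det (A.submatrix id μ) * det (B.submatrix μ id) :=
  det_mul_eq_sum_strictMono (ι := ιᵒᵈ) A B

end Determinant

section Polynomial

variable {R : Type*} [CommRing R] {n : ℕ}

theorem Matrix.of_eval_eq_mul (x : Fin n → R) (q : Fin n → R[X]) {N : ℕ}
    (hq : ∀ j, (q j).natDegree < N) :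
    (of fun i j => (q j).eval (x i)) =
      (of fun i (m : Fin N) => x i ^ (m : ℕ)) * of fun (m : Fin N) j => (q j).coeff m := by
  ext i j
  simp only [of_apply, mul_apply, eval_eq_sum_range' (hq j), Fin.sum_univ_eq_sum_range
    (fun m => x i ^ m * (q j).coeff m), mul_comm]

open scoped Classical in
theorem Matrix.det_of_eval_eq_sum_strictAnti (x : Fin n → R) (q : Fin n → R[X]) {N : ℕ}
    (hq : ∀ j, (q j).natDegree < N) :
    det (of fun i j => (q j).eval (x i)) = ∑ μ : Fin n → Fin N with StrictAnti μ,
      det (of fun i j => x i ^ (μ j : ℕ)) * det (of fun i j => (q j).coeff (μ i)) := by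
  rw [of_eval_eq_mul x q hq, det_mul_eq_sum_strictAnti]
  rfl

theorem Polynomial.natDegree_X_pow_mul_sum_range_lt (e D : ℕ) (c : ℕ → R) :
    (X ^ e * ∑ k ∈ range (D + 1), C (c k) * X ^ k).natDegree < e + D + 1 := by
  have hsum : (∑ k ∈ range (D + 1), C (c k) * X ^ k).natDegree ≤ D :=
    natDegree_sum_le_of_forall_le _ _ fun k hk =>
      (natDegree_C_mul_X_pow_le _ _).trans (mem_range_succ_iff.mp hk)
  have := (natDegree_mul_le (p := (X : R[X]) ^ e)).trans (add_le_add (natDegree_X_pow_le e) hsum)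
  omega

theorem Polynomial.coeff_X_pow_mul_sum_range {D : ℕ} {c : ℕ → R}
    (hc : ∀ k, D < k → c k = 0) (e m : ℕ) :
    (X ^ e * ∑ k ∈ range (D + 1), C (c k) * X ^ k).coeff m =
      if e ≤ m then c (m - e) else 0 := by
  simp only [coeff_X_pow_mul', finsetSum_coeff, coeff_C_mul_X_pow, sum_ite_eq, mem_range]
  exact if_congr Iff.rfl (ite_eq_left_iff.mpr fun h => (hc _ (by omega)).symm) rfl

end Polynomial

theorem stmt_14_general (F : Type*) [Field F] (n D : ℕ) (x : Fin n → F)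
    (a : Fin n → ℕ → F)
    (ha : ∀ j k, D < k → a j k = 0) :
    Matrix.det (Matrix.of fun i j : Fin n =>
        x i ^ (n - 1 - (j : ℕ)) * ∑ k ∈ Finset.range (D + 1), a j k * x i ^ k) /
      ∏ p ∈ Finset.univ.filter (fun p : Fin n × Fin n => p.1 < p.2), (x p.1 - x p.2)
    = ∑ lam ∈ (Finset.univ : Finset (Fin n → Fin (D + 1))).filter
          (fun lam => ∀ i j : Fin n, i ≤ j → lam j ≤ lam i),
        schur F n (fun i => (lam i : ℕ)) x *
          Matrix.det (Matrix.of fun i j : Fin n =>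
            if (i : ℕ) ≤ (lam i : ℕ) + (j : ℕ)
            then a j ((lam i : ℕ) + (j : ℕ) - (i : ℕ)) else 0) := by
  set q : Fin n → F[X] := fun j =>
    X ^ (n - 1 - (j : ℕ)) * ∑ k ∈ range (D + 1), C (a j k) * X ^ k
  have hq : ∀ j, (q j).natDegree < D + n := fun j =>
    (natDegree_X_pow_mul_sum_range_lt _ _ _).trans_le (by omega)
  have hM : (of fun i j : Fin n =>
      x i ^ (n - 1 - (j : ℕ)) * ∑ k ∈ range (D + 1), a j k * x i ^ k) =
      of fun i j => (q j).eval (x i) := by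
    ext i j
    simp [q, eval_finsetSum]
  simp only [schur, div_mul_eq_mul_div, ← sum_div]
  congr 1
  rw [hM, det_of_eval_eq_sum_strictAnti x q hq]
  refine (Fin.sum_strictAnti_eq_sum_antitone
      (fun ν => det (of fun i j => x i ^ ν j) * det (of fun i j => (q j).coeff (ν i)))).trans
    (sum_congr (by ext; simp only [mem_filter_univ]; rfl) fun lam _ => ?_)
  congr 2
  ext i j
  simp only [of_apply, q, coeff_X_pow_mul_sum_range (ha j)]
  exact if_congr (by omega) (congrArg _ (by omega)) rfl

/-- Let `p_j(x) = ∑_k a_{j,k} x^k` be polynomials (with `a_{j,k} = 0` for `k > D`).  Then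
`det( x_i^{n−j} p_j(x_i) ) / ∏_{i<j}(x_i − x_j)
  = ∑_λ s_λ(x) · det_{1≤i,j≤n}( a_{j, λ_i + j − i} )`,
the sum being over all partitions `λ` with at most `n` parts (only those with
`λ_1 ≤ D` contribute, so the sum is restricted accordingly); entries with negative
index `λ_i + j − i < 0` are `0`. -/
theorem stmt_14 (F : Type*) [Field F] (n D : ℕ) (x : Fin n → F)
    (hx : Function.Injective x) (a : Fin n → ℕ → F)
    (ha : ∀ j k, D < k → a j k = 0) :
    Matrix.det (Matrix.of fun i j : Fin n =>
        x i ^ (n - 1 - (j : ℕ)) * ∑ k ∈ Finset.range (D + 1), a j k * x i ^ k) /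
      ∏ p ∈ Finset.univ.filter (fun p : Fin n × Fin n => p.1 < p.2), (x p.1 - x p.2)
    = ∑ lam ∈ (Finset.univ : Finset (Fin n → Fin (D + 1))).filter
          (fun lam => ∀ i j : Fin n, i ≤ j → lam j ≤ lam i),
        schur F n (fun i => (lam i : ℕ)) x *
          Matrix.det (Matrix.of fun i j : Fin n =>
            if (i : ℕ) ≤ (lam i : ℕ) + (j : ℕ)
            then a j ((lam i : ℕ) + (j : ℕ) - (i : ℕ)) else 0) :=
  stmt_14_general F n D x a ha
end
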